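/- arXiv:1701.06192 — 6 statements merged into one kernel-verified Lean document; each statement's English description precedes it below -/
import Mathlib

section
/- For a subset A of F_p, the sum over all pairs (a,b) in F_p^2 of (ι_{A,A}(ℓ_{a,b}) − |A|^2/p)^2 is at most p·|A|^2. -/
/-!
With `q = |F|` and `N = |A||B|`, each point lies on exactly `q` of the `q²` lines `y = a x + b`,
so the incidence counts `ι(ℓ)` sum to `qN` and have mean `N / q`. Two distinct points lie on at
most one common line, so counting pairs of points on each line gives `∑ ι(ℓ)² ≤ qN + N²`. Hence
`∑ (ι(ℓ) - N/q)² = ∑ ι(ℓ)² - N² ≤ qN`.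
-/

open Finset

theorem sum_sq_sub_const {ι R : Type*} [CommRing R] (s : Finset ι) (f : ι → R) (c : R) :
    ∑ i ∈ s, (f i - c) ^ 2 = ∑ i ∈ s, f i ^ 2 - 2 * c * ∑ i ∈ s, f i + #s * c ^ 2 := by
  simp only [sub_sq, sum_add_distrib, sum_sub_distrib, sum_const, nsmul_eq_mul, ← sum_mul,
    ← mul_sum]
  ring

section

variable {F : Type*} [Field F]

theorem line_eq_of_incident_points_ne {P Q ℓ ℓ' : F × F} (hPQ : P ≠ Q)
    (hP : P.2 = ℓ.1 * P.1 + ℓ.2) (hQ : Q.2 = ℓ.1 * Q.1 + ℓ.2)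
    (hP' : P.2 = ℓ'.1 * P.1 + ℓ'.2) (hQ' : Q.2 = ℓ'.1 * Q.1 + ℓ'.2) : ℓ = ℓ' := by
  have h : (ℓ.1 - ℓ'.1) * (P.1 - Q.1) = 0 := by linear_combination hQ - hP - hQ' + hP'
  rcases mul_eq_zero.1 h with hslope | hx
  · have hslope : ℓ.1 = ℓ'.1 := sub_eq_zero.1 hslope
    refine Prod.ext hslope ?_
    rw [hslope] at hP
    linear_combination hP' - hP
  · have hx : P.1 = Q.1 := sub_eq_zero.1 hx
    exact absurd (Prod.ext hx (by linear_combination hP - hQ + ℓ.1 * hx)) hPQ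

variable [DecidableEq F]

def lineIncidences (A B : Finset F) (ℓ : F × F) : ℕ :=
  #{P ∈ A ×ˢ B | P.2 = ℓ.1 * P.1 + ℓ.2}

theorem lineIncidences_sq (A B : Finset F) (ℓ : F × F) :
    lineIncidences A B ℓ ^ 2 =
      #{PQ ∈ (A ×ˢ B) ×ˢ (A ×ˢ B) |
        PQ.1.2 = ℓ.1 * PQ.1.1 + ℓ.2 ∧ PQ.2.2 = ℓ.1 * PQ.2.1 + ℓ.2} := by
  rw [lineIncidences, sq, ← card_product, ← filter_product]

variable [Fintype F]

theorem card_lines_through_point (P : F × F) :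
    #{ℓ : F × F | P.2 = ℓ.1 * P.1 + ℓ.2} = Fintype.card F := by
  have : ({ℓ : F × F | P.2 = ℓ.1 * P.1 + ℓ.2} : Finset (F × F)) =
      univ.image fun a => (a, P.2 - a * P.1) := by
    ext ℓ
    simp only [mem_filter, mem_univ, true_and, mem_image]
    constructor
    · rintro h
      exact ⟨ℓ.1, Prod.ext rfl (by rw [h]; ring)⟩
    · rintro ⟨a, rfl⟩
      ring
  rw [this, card_image_of_injective _ fun a b h => congrArg Prod.fst h, card_univ]

theorem card_lines_through_pair_le (P Q : F × F) :
    #{ℓ : F × F | P.2 = ℓ.1 * P.1 + ℓ.2 ∧ Q.2 = ℓ.1 * Q.1 + ℓ.2}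
      ≤ (if P = Q then Fintype.card F else 0) + 1 := by
  split_ifs with hPQ
  · subst hPQ
    simp only [and_self, card_lines_through_point, le_add_iff_nonneg_right, zero_le]
  · refine card_le_one.2 fun ℓ hℓ ℓ' hℓ' => ?_
    simp only [mem_filter, mem_univ, true_and] at hℓ hℓ'
    exact line_eq_of_incident_points_ne hPQ hℓ.1 hℓ.2 hℓ'.1 hℓ'.2

variable (A B : Finset F)

theorem sum_lineIncidences :
    ∑ ℓ : F × F, lineIncidences A B ℓ = Fintype.card F * (#A * #B) := by
  have := sum_card_bipartiteAbove_eq_sum_card_bipartiteBelow (s := A ×ˢ B)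
    (t := (univ : Finset (F × F))) (fun P ℓ => P.2 = ℓ.1 * P.1 + ℓ.2)
  simp only [bipartiteAbove, bipartiteBelow, card_lines_through_point, sum_const, card_product,
    smul_eq_mul] at this
  rw [mul_comm]
  exact this.symm

theorem sum_lineIncidences_sq_le :
    ∑ ℓ : F × F, lineIncidences A B ℓ ^ 2
      ≤ Fintype.card F * (#A * #B) + (#A * #B) ^ 2 := by
  set S := A ×ˢ B
  calc ∑ ℓ : F × F, lineIncidences A B ℓ ^ 2
      = ∑ PQ ∈ S ×ˢ S,
          #{ℓ : F × F | PQ.1.2 = ℓ.1 * PQ.1.1 + ℓ.2 ∧ PQ.2.2 = ℓ.1 * PQ.2.1 + ℓ.2} := by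
        simp_rw [lineIncidences_sq]
        exact (sum_card_bipartiteAbove_eq_sum_card_bipartiteBelow _).symm
    _ ≤ ∑ PQ ∈ S ×ˢ S, ((if PQ.1 = PQ.2 then Fintype.card F else 0) + 1) :=
        sum_le_sum fun PQ _ => card_lines_through_pair_le PQ.1 PQ.2
    _ = Fintype.card F * (#A * #B) + (#A * #B) ^ 2 := by
        rw [sum_add_distrib, sum_product, sum_const, card_product, smul_eq_mul, mul_one]
        simp only [sum_ite_eq, sum_ite_mem, inter_self, sum_const, smul_eq_mul, S, card_product]
        ring

theorem sum_sq_lineIncidences_sub_le :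
    ∑ ℓ : F × F, ((lineIncidences A B ℓ : ℝ) - #A * #B / Fintype.card F) ^ 2
      ≤ Fintype.card F * (#A * #B) := by
  have hsum : ∑ ℓ : F × F, (lineIncidences A B ℓ : ℝ) = Fintype.card F * (#A * #B) := by
    exact_mod_cast sum_lineIncidences A B
  have hsum_sq : ∑ ℓ : F × F, (lineIncidences A B ℓ : ℝ) ^ 2
      ≤ Fintype.card F * (#A * #B) + (#A * #B) ^ 2 := by
    exact_mod_cast sum_lineIncidences_sq_le A B
  set q : ℝ := (Fintype.card F : ℝ)
  set N : ℝ := #A * #B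
  have hq : q ≠ 0 := Nat.cast_ne_zero.2 Fintype.card_ne_zero
  have hmean : 2 * (N / q) * (q * N) - (q * q) * (N / q) ^ 2 = N ^ 2 := by
    field_simp
    ring
  rw [sum_sq_sub_const, hsum, card_univ, Fintype.card_prod, Nat.cast_mul]
  linarith

end

/-- For a subset `A` of `F_p`, `Σ_{(a,b)∈F_p²} (ι_{A,A}(ℓ_{a,b}) − |A|²/p)² ≤ p·|A|²`. -/
theorem sum_line_counts_deviation (p : ℕ) [Fact p.Prime] (A : Finset (ZMod p)) :
    ∑ a : ZMod p, ∑ b : ZMod p,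
      ((((A ×ˢ A).filter (fun xy => xy.2 = a * xy.1 + b)).card : ℝ)
        - (A.card : ℝ)^2 / (p : ℝ))^2
      ≤ (p : ℝ) * (A.card : ℝ)^2 := by
  have h := sum_sq_lineIncidences_sub_le A A
  rw [ZMod.card, Fintype.sum_prod_type, ← sq] at h
  exact h
end

section
/- Let G be a multiplicative subgroup of F_p^* with |G| ≥ p^{2/3}. Then for any λ, μ ∈ F_p^*, every element of F_p^* lies in the set G + λG + μG = {g1 + λg2 + μg3 : g1, g2, g3 ∈ G}. -/
/-!
Write `S(t) = ∑_{g ∈ G} e_p(t g)`. If `ξ ∉ G + λG + μG`, orthogonality of characters gives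
`∑_t S(t) S(λt) S(μt) e_p(-ξt) = 0`. Since `S(tg) = S(t)` for `g ∈ G`, averaging over `g ∈ G`
lets us replace `e_p(-ξt)` by `S(-ξt) / |G|`; the term `t = 0` is then `|G|⁴`. Instead of the
Gauss-sum bound we use the same invariance together with Parseval, `∑_t |S(t)|² = p|G|`: the
`|G|` equal values `|S(tg)|²` give `|S(t)|² ≤ p - |G|` for `t ≠ 0`. Bounding
`|S(μt) S(-ξt)| ≤ p - |G|` and `∑_{t ≠ 0} |S(t) S(λt)| ≤ p|G| - |G|²` yields
`|G|³ ≤ (p - |G|)² < p²`, contradicting `|G| ≥ p^{2/3}`.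
-/

open Finset

namespace SumsetCoversUnits

variable {F : Type*} [Field F]

noncomputable def expSum (ψ : AddChar F ℂ) (G : Finset F) (t : F) : ℂ :=
  ∑ g ∈ G, ψ (t * g)

variable {ψ : AddChar F ℂ} {G : Finset F}

@[simp]
lemma expSum_zero : expSum ψ G 0 = #G := by
  simp [expSum]

lemma image_mul_left_eq [DecidableEq F] (hG0 : 0 ∉ G) (hGmul : ∀ x ∈ G, ∀ y ∈ G, x * y ∈ G)
    {g : F} (hg : g ∈ G) : G.image (g * ·) = G :=
  eq_of_subset_of_card_le (image_subset_iff.mpr fun x hx => hGmul g hg x hx)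
    (card_image_of_injective _ (mul_right_injective₀ (ne_of_mem_of_not_mem hg hG0))).ge

lemma expSum_mul_of_mem (hG0 : 0 ∉ G) (hGmul : ∀ x ∈ G, ∀ y ∈ G, x * y ∈ G) {g : F}
    (hg : g ∈ G) (t : F) : expSum ψ G (t * g) = expSum ψ G t := by
  classical
  conv_rhs => rw [expSum, ← image_mul_left_eq hG0 hGmul hg,
    sum_image fun x _ y _ h => mul_right_injective₀ (ne_of_mem_of_not_mem hg hG0) h]
  simp only [expSum, mul_assoc]

variable [Fintype F]

lemma expSum_mul_conj (t : F) :
    expSum ψ G t * starRingEnd ℂ (expSum ψ G t) = ∑ g ∈ G, ∑ h ∈ G, ψ (t * (g - h)) := by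
  simp only [expSum, map_sum, sum_mul_sum, ← AddChar.map_neg_eq_conj, ← AddChar.map_add_eq_mul,
    sub_eq_add_neg, mul_add, mul_neg]

lemma sum_mul_expSum_eq_card_mul (hG0 : 0 ∉ G) {A : F → ℂ}
    (hA : ∀ g ∈ G, ∀ t, A (t * g) = A t) (c : F) :
    ∑ t, A t * expSum ψ G (c * t) = #G * ∑ t, A t * ψ (c * t) :=
  calc ∑ t, A t * expSum ψ G (c * t) = ∑ g ∈ G, ∑ t, A t * ψ (c * t * g) := by
        simp only [expSum, mul_sum]
        exact sum_comm
    _ = ∑ g ∈ G, ∑ t, A t * ψ (c * t) := sum_congr rfl fun g hg => by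
        have hperm : ∑ t, A (t * g) * ψ (c * (t * g)) = ∑ t, A t * ψ (c * t) :=
          Equiv.sum_comp (Equiv.mulRight₀ g (ne_of_mem_of_not_mem hg hG0)) fun t => A t * ψ (c * t)
        simpa only [hA g hg, ← mul_assoc] using hperm
    _ = #G * ∑ t, A t * ψ (c * t) := by rw [sum_const, nsmul_eq_mul]

variable [DecidableEq F]

lemma sum_norm_expSum_sq (hψ : ψ.IsPrimitive) :
    ∑ t, ‖expSum ψ G t‖ ^ 2 = Fintype.card F * #G := by
  have key : ∑ t, expSum ψ G t * starRingEnd ℂ (expSum ψ G t) = Fintype.card F * #G := by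
    simp_rw [expSum_mul_conj]
    rw [sum_comm, sum_congr rfl fun g hg => ?_]
    · rw [sum_const, nsmul_eq_mul, mul_comm]
    rw [sum_comm]
    simp_rw [AddChar.sum_mulShift _ hψ, sub_eq_zero]
    simp [hg]
  exact_mod_cast (sum_congr rfl fun t _ => (Complex.mul_conj' _).symm).trans key

lemma sum_erase_zero_norm_expSum_sq (hψ : ψ.IsPrimitive) :
    ∑ t ∈ univ.erase 0, ‖expSum ψ G t‖ ^ 2 = Fintype.card F * #G - #G ^ 2 := by
  rw [sum_erase_eq_sub (mem_univ _), sum_norm_expSum_sq hψ]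
  simp

lemma norm_expSum_sq_le (hψ : ψ.IsPrimitive) (hG0 : 0 ∉ G)
    (hGmul : ∀ x ∈ G, ∀ y ∈ G, x * y ∈ G) (hG : G.Nonempty) {t : F} (ht : t ≠ 0) :
    ‖expSum ψ G t‖ ^ 2 ≤ Fintype.card F - #G := by
  have key : #G * ‖expSum ψ G t‖ ^ 2 ≤ #G * (Fintype.card F - #G) :=
    calc #G * ‖expSum ψ G t‖ ^ 2 = ∑ g ∈ G, ‖expSum ψ G (t * g)‖ ^ 2 := by
          rw [sum_congr rfl fun g hg => by rw [expSum_mul_of_mem hG0 hGmul hg], sum_const,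
            nsmul_eq_mul]
      _ = ∑ u ∈ G.image (t * ·), ‖expSum ψ G u‖ ^ 2 :=
          (sum_image (f := fun u => ‖expSum ψ G u‖ ^ 2) fun x _ y _ h =>
            mul_right_injective₀ ht h).symm
      _ ≤ ∑ u ∈ univ.erase 0, ‖expSum ψ G u‖ ^ 2 := by
          refine sum_le_sum_of_subset_of_nonneg ?_ fun _ _ _ => by positivity
          simp only [image_subset_iff, mem_erase, mem_univ, and_true]
          exact fun x hx => mul_ne_zero ht (ne_of_mem_of_not_mem hx hG0)
      _ = #G * (Fintype.card F - #G) := by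
          rw [sum_erase_zero_norm_expSum_sq hψ]; ring
  exact le_of_mul_le_mul_left key (by exact_mod_cast hG.card_pos)

lemma sum_erase_zero_comp_mul_left {f : F → ℝ} {a : F} (ha : a ≠ 0) :
    ∑ t ∈ univ.erase 0, f (a * t) = ∑ t ∈ univ.erase 0, f t := by
  have hperm : ∑ t, f (a * t) = ∑ t, f t := Equiv.sum_comp (Equiv.mulLeft₀ a ha) f
  rw [sum_erase_eq_sub (mem_univ _), sum_erase_eq_sub (mem_univ _), hperm, mul_zero]

lemma sum_erase_zero_norm_mul_norm_le (hψ : ψ.IsPrimitive) {a : F} (ha : a ≠ 0) :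
    ∑ t ∈ univ.erase 0, ‖expSum ψ G t‖ * ‖expSum ψ G (a * t)‖ ≤ Fintype.card F * #G - #G ^ 2 :=
  calc ∑ t ∈ univ.erase 0, ‖expSum ψ G t‖ * ‖expSum ψ G (a * t)‖
      ≤ ∑ t ∈ univ.erase 0, (‖expSum ψ G t‖ ^ 2 + ‖expSum ψ G (a * t)‖ ^ 2) / 2 :=
        sum_le_sum fun t _ => by linarith [two_mul_le_add_sq ‖expSum ψ G t‖ ‖expSum ψ G (a * t)‖]
    _ = Fintype.card F * #G - #G ^ 2 := by
        rw [← sum_div, sum_add_distrib,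
          sum_erase_zero_comp_mul_left (f := fun u => ‖expSum ψ G u‖ ^ 2) ha,
          sum_erase_zero_norm_expSum_sq hψ]
        ring

lemma sum_expSum_mul_eq_zero (hψ : ψ.IsPrimitive) {A B C : Finset F} {lam mu ξ : F}
    (h : ∀ a ∈ A, ∀ b ∈ B, ∀ c ∈ C, a + lam * b + mu * c ≠ ξ) :
    ∑ t, expSum ψ A t * expSum ψ B (lam * t) * expSum ψ C (mu * t) * ψ (-ξ * t) = 0 := by
  have hexpand (t : F) : expSum ψ A t * expSum ψ B (lam * t) * expSum ψ C (mu * t) * ψ (-ξ * t) =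
      ∑ c ∈ C, ∑ b ∈ B, ∑ a ∈ A, ψ (t * (a + lam * b + mu * c - ξ)) := by
    simp only [expSum, sum_mul, mul_sum]
    refine sum_congr rfl fun c _ => sum_congr rfl fun b _ => sum_congr rfl fun a _ => ?_
    rw [← AddChar.map_add_eq_mul, ← AddChar.map_add_eq_mul, ← AddChar.map_add_eq_mul]
    congr 1
    ring
  simp_rw [hexpand]
  rw [sum_comm]
  refine sum_eq_zero fun c hc => ?_
  rw [sum_comm]
  refine sum_eq_zero fun b hb => ?_
  rw [sum_comm]
  refine sum_eq_zero fun a ha => ?_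
  rw [AddChar.sum_mulShift _ hψ, if_neg (sub_ne_zero.mpr (h a ha b hb c hc)), Nat.cast_zero]

lemma sum_expSum_mul_expSum_eq_zero (hψ : ψ.IsPrimitive) (hG0 : 0 ∉ G)
    (hGmul : ∀ x ∈ G, ∀ y ∈ G, x * y ∈ G) {lam mu ξ : F}
    (h : ∀ a ∈ G, ∀ b ∈ G, ∀ c ∈ G, a + lam * b + mu * c ≠ ξ) :
    ∑ t, expSum ψ G t * expSum ψ G (lam * t) * expSum ψ G (mu * t) * expSum ψ G (-ξ * t) = 0 := by
  have hA (g : F) (hg : g ∈ G) (t : F) :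
      expSum ψ G (t * g) * expSum ψ G (lam * (t * g)) * expSum ψ G (mu * (t * g)) =
        expSum ψ G t * expSum ψ G (lam * t) * expSum ψ G (mu * t) := by
    simp only [← mul_assoc, expSum_mul_of_mem hG0 hGmul hg]
  rw [sum_mul_expSum_eq_card_mul hG0 hA, sum_expSum_mul_eq_zero hψ h, mul_zero]

lemma card_pow_three_le_of_forall_add_ne (hψ : ψ.IsPrimitive) (hG0 : 0 ∉ G)
    (hGmul : ∀ x ∈ G, ∀ y ∈ G, x * y ∈ G) (hG : G.Nonempty) {lam mu ξ : F}
    (hlam : lam ≠ 0) (hmu : mu ≠ 0) (hξ : ξ ≠ 0)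
    (h : ∀ a ∈ G, ∀ b ∈ G, ∀ c ∈ G, a + lam * b + mu * c ≠ ξ) :
    (#G : ℝ) ^ 3 ≤ (Fintype.card F - #G) ^ 2 := by
  set S := expSum ψ G
  set X : ℝ := Fintype.card F - #G
  have hX : 0 ≤ X := sub_nonneg.mpr (by exact_mod_cast card_le_univ G)
  have hvanish : ∑ t, S t * S (lam * t) * S (mu * t) * S (-ξ * t) = 0 :=
    sum_expSum_mul_expSum_eq_zero hψ hG0 hGmul h
  have hpair : ∀ t ≠ 0, ‖S (mu * t)‖ * ‖S (-ξ * t)‖ ≤ X := fun t ht => by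
    nlinarith [two_mul_le_add_sq ‖S (mu * t)‖ ‖S (-ξ * t)‖,
      norm_expSum_sq_le hψ hG0 hGmul hG (mul_ne_zero hmu ht),
      norm_expSum_sq_le hψ hG0 hGmul hG (mul_ne_zero (neg_ne_zero.mpr hξ) ht)]
  rw [← add_sum_erase _ _ (mem_univ 0)] at hvanish
  have hS0 : S 0 = #G := expSum_zero
  simp only [mul_zero, hS0] at hvanish
  have hmain : (#G : ℝ) ^ 4 ≤ (∑ t ∈ univ.erase 0, ‖S t‖ * ‖S (lam * t)‖) * X :=
    calc (#G : ℝ) ^ 4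
        = ‖∑ t ∈ univ.erase 0, S t * S (lam * t) * S (mu * t) * S (-ξ * t)‖ := by
          rw [eq_neg_of_add_eq_zero_right hvanish, norm_neg]
          simp only [norm_mul, Complex.norm_natCast]
          ring
      _ ≤ ∑ t ∈ univ.erase 0, ‖S t‖ * ‖S (lam * t)‖ * X := by
          refine (norm_sum_le _ _).trans (sum_le_sum fun t ht => ?_)
          rw [norm_mul, norm_mul, norm_mul, mul_assoc]
          exact mul_le_mul_of_nonneg_left (hpair t (ne_of_mem_erase ht)) (by positivity)
      _ = (∑ t ∈ univ.erase 0, ‖S t‖ * ‖S (lam * t)‖) * X := (sum_mul ..).symm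
  have hcube : (#G : ℝ) * #G ^ 3 ≤ #G * X ^ 2 :=
    calc (#G : ℝ) * #G ^ 3 = #G ^ 4 := by ring
      _ ≤ (Fintype.card F * #G - #G ^ 2) * X :=
          hmain.trans (mul_le_mul_of_nonneg_right (sum_erase_zero_norm_mul_norm_le hψ hlam) hX)
      _ = #G * X ^ 2 := by ring
  exact le_of_mul_le_mul_left hcube (by exact_mod_cast hG.card_pos)

end SumsetCoversUnits

open SumsetCoversUnits

theorem sumset_covers_units_general (p : ℕ) [Fact p.Prime] (G : Finset (ZMod p))
    (hG0 : (0 : ZMod p) ∉ G)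
    (hGmul : ∀ x ∈ G, ∀ y ∈ G, x * y ∈ G)
    (hcard : (G.card : ℝ) ≥ (p : ℝ) ^ ((2 : ℝ) / 3))
    (lam mu : ZMod p) (hlam : lam ≠ 0) (hmu : mu ≠ 0) :
    ∀ ξ : ZMod p, ξ ≠ 0 → ∃ g₁ ∈ G, ∃ g₂ ∈ G, ∃ g₃ ∈ G,
      ξ = g₁ + lam * g₂ + mu * g₃ := by
  intro ξ hξ
  by_contra! hξG
  have hp0 : (0 : ℝ) < p := by exact_mod_cast (Fact.out : p.Prime).pos
  have hGpos : (0 : ℝ) < #G := (Real.rpow_pos_of_pos hp0 _).trans_le hcard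
  have hGp : (#G : ℝ) ≤ p := by exact_mod_cast (card_le_univ G).trans_eq (ZMod.card p)
  have hp : (p : ℝ) ^ 2 ≤ (#G : ℝ) ^ 3 :=
    calc (p : ℝ) ^ 2 = ((p : ℝ) ^ ((2 : ℝ) / 3)) ^ 3 := by
          rw [← Real.rpow_natCast (_ ^ _) 3, ← Real.rpow_mul hp0.le]; norm_num
      _ ≤ (#G : ℝ) ^ 3 := by gcongr
  have hbound := card_pow_three_le_of_forall_add_ne (ZMod.isPrimitive_stdAddChar p) hG0 hGmul
    (card_pos.mp (by exact_mod_cast hGpos)) hlam hmu hξ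
    fun a ha b hb c hc => (hξG a ha b hb c hc).symm
  rw [ZMod.card] at hbound
  nlinarith [mul_pos hGpos (by linarith : (0 : ℝ) < 2 * p - #G)]

/-- If `G ≤ F_p^*` is a multiplicative subgroup with `|G| ≥ p^{2/3}`, then for any
`λ, μ ∈ F_p^*` every element of `F_p^*` lies in `G + λG + μG`. -/
theorem sumset_covers_units (p : ℕ) [Fact p.Prime] (G : Finset (ZMod p))
    (hG0 : (0 : ZMod p) ∉ G) (hG1 : (1 : ZMod p) ∈ G)
    (hGmul : ∀ x ∈ G, ∀ y ∈ G, x * y ∈ G)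
    (hcard : (G.card : ℝ) ≥ (p : ℝ) ^ ((2 : ℝ) / 3))
    (lam mu : ZMod p) (hlam : lam ≠ 0) (hmu : mu ≠ 0) :
    ∀ ξ : ZMod p, ξ ≠ 0 → ∃ g₁ ∈ G, ∃ g₂ ∈ G, ∃ g₃ ∈ G,
      ξ = g₁ + lam * g₂ + mu * g₃ :=
  sumset_covers_units_general p G hG0 hGmul hcard lam mu hlam hmu
end

section
/- Let G be a multiplicative subgroup of F_p^* with |G| > p^{2/3}. Then for every λ ∈ F_p^* and every ξ ∈ F_p^*, there exist u1, u2, v1, v2 ∈ G with v1 ≠ v2 and λu1 − u2 = ξ(v1 − v2); in particular every element of F_p^* can be written as (λu1 − u2)/(v1 − v2) with u1,u2,v1,v2 ∈ G. -/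
/-!
Write `S(t) = ∑_{x ∈ G} ψ(t x)` for the standard additive character `ψ` of `𝔽_p`. Orthogonality
of characters gives `p N = ∑_t S(λt) S(-t) S(-ξt) S(ξt)` for the number `N` of solutions in `G⁴`,
and the term `t = 0` is `|G|⁴`. As `S` is constant on each coset `tG`, Parseval gives
`|S(t)|² ≤ p - |G|` for `t ≠ 0`; with AM-GM and Parseval once more, the terms `t ≠ 0` contribute
at most `(p - |G|)² |G|`. Solutions with `v₁ = v₂` have `u₂ = λu₁`, so there are at most `|G|²`
of them, while `|G|⁴ - (p - |G|)² |G| > p |G|²` as soon as `|G|³ > p²`.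
-/

open Finset

lemma Finset.image_mul_left_eq_self_of_mul_mem {M : Type*} [MonoidWithZero M]
    [IsLeftCancelMulZero M] [DecidableEq M] {G : Finset M} (hG0 : (0 : M) ∉ G) (hGmul : ∀ x ∈ G, ∀ y ∈ G, x * y ∈ G)
    {g : M} (hg : g ∈ G) : G.image (g * ·) = G :=
  eq_of_subset_of_card_le (image_subset_iff.2 fun x hx => hGmul g hg x hx)
    (card_image_of_injective _ (mul_right_injective₀ (ne_of_mem_of_not_mem hg hG0))).ge

namespace AddChar

lemma map_sum_eq_prod {A M ι : Type*} [AddCommMonoid A] [CommMonoid M] (ψ : AddChar A M)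
    (s : Finset ι) (f : ι → A) : ψ (∑ i ∈ s, f i) = ∏ i ∈ s, ψ (f i) :=
  map_prod ψ.toMonoidHom (fun i => Multiplicative.ofAdd (f i)) s

section CommRing

variable {R : Type*} [CommRing R] (ψ : AddChar R ℂ)

noncomputable def expSum (A : Finset R) (t : R) : ℂ :=
  ∑ x ∈ A, ψ (t * x)

variable {ψ} (A : Finset R)

@[simp]
lemma expSum_zero : ψ.expSum A 0 = #A := by
  simp [expSum]

lemma expSum_neg [Finite R] (t : R) : ψ.expSum A (-t) = starRingEnd ℂ (ψ.expSum A t) := by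
  simp only [expSum, map_sum, neg_mul, map_neg_eq_conj]

@[simp]
lemma norm_expSum_neg [Finite R] (t : R) : ‖ψ.expSum A (-t)‖ = ‖ψ.expSum A t‖ := by
  rw [expSum_neg, RCLike.norm_conj]

lemma expSum_mul_of_mem [IsDomain R] [DecidableEq R] {G : Finset R} (hG0 : (0 : R) ∉ G)
    (hGmul : ∀ x ∈ G, ∀ y ∈ G, x * y ∈ G) {g : R} (hg : g ∈ G) (t : R) : ψ.expSum G (t * g) = ψ.expSum G t := by
  conv_rhs => rw [expSum, ← G.image_mul_left_eq_self_of_mul_mem hG0 hGmul hg]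
  rw [sum_image fun x _ y _ h => mul_right_injective₀ (ne_of_mem_of_not_mem hg hG0) h]
  simp only [expSum, mul_assoc]

variable [Fintype R] [DecidableEq R]

lemma card_mul_card_filter_sum_mul_eq_zero (hψ : ψ.IsPrimitive) {ι : Type*} [Fintype ι]
    [DecidableEq ι] (c : ι → R) :
    (Fintype.card R : ℂ) * #{x ∈ Fintype.piFinset fun _ => A | ∑ i, c i * x i = 0}
      = ∑ t, ∏ i, ψ.expSum A (c i * t) := by
  calc (Fintype.card R : ℂ) * #{x ∈ Fintype.piFinset fun _ => A | ∑ i, c i * x i = 0}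
      = ∑ x ∈ Fintype.piFinset fun _ => A, ∑ t, ψ (t * ∑ i, c i * x i) := by
        rw [card_filter, Nat.cast_sum, mul_sum]
        refine sum_congr rfl fun x _ => ?_
        rw [sum_mulShift _ hψ]
        split_ifs <;> simp
    _ = ∑ t, ∏ i, ψ.expSum A (c i * t) := by
        rw [sum_comm]
        refine sum_congr rfl fun t _ => ?_
        simp_rw [expSum, ← sum_prod_piFinset, mul_sum, map_sum_eq_prod]
        exact sum_congr rfl fun x _ => prod_congr rfl fun i _ => by ring_nf

lemma sum_norm_sq_expSum (hψ : ψ.IsPrimitive) :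
    ∑ t, ‖ψ.expSum A t‖ ^ 2 = Fintype.card R * #A := by
  have key : ∑ t, ψ.expSum A t * ψ.expSum A (-t) = Fintype.card R * #A := by
    calc ∑ t, ψ.expSum A t * ψ.expSum A (-t)
        = ∑ x ∈ A, ∑ y ∈ A, ∑ t, ψ (t * (x - y)) := by
          simp_rw [expSum, sum_mul_sum, ← map_add_eq_mul, mul_sub, neg_mul, ← sub_eq_add_neg]
          rw [sum_comm]
          exact sum_congr rfl fun x _ => sum_comm
      _ = Fintype.card R * #A := by
          simp [sum_mulShift _ hψ, sub_eq_zero, mul_comm]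
  simp only [expSum_neg, Complex.mul_conj, Complex.normSq_eq_norm_sq] at key
  exact_mod_cast key

end CommRing

section Field

variable {F : Type*} [Field F] [Fintype F] [DecidableEq F] {ψ : AddChar F ℂ}

lemma sum_erase_zero_norm_sq_expSum_mul (hψ : ψ.IsPrimitive) (A : Finset F) {c : F}
    (hc : c ≠ 0) :
    ∑ t ∈ univ.erase 0, ‖ψ.expSum A (c * t)‖ ^ 2 = Fintype.card F * #A - #A ^ 2 := by
  have hall : ∑ t, ‖ψ.expSum A (c * t)‖ ^ 2 = Fintype.card F * #A := by
    rw [← sum_norm_sq_expSum A hψ]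
    exact Fintype.sum_bijective (c * ·) (mulLeft_bijective₀ c hc) _ _ fun _ => rfl
  rw [← hall, ← add_sum_erase _ _ (mem_univ 0)]
  simp

variable {G : Finset F}

lemma norm_sq_expSum_le (hψ : ψ.IsPrimitive) (hG0 : (0 : F) ∉ G)
    (hGmul : ∀ x ∈ G, ∀ y ∈ G, x * y ∈ G) {t : F} (ht : t ≠ 0) :
    ‖ψ.expSum G t‖ ^ 2 ≤ Fintype.card F - #G := by
  rcases G.eq_empty_or_nonempty with rfl | hne
  · simp [expSum]
  have hinj : Set.InjOn (t * ·) G := (mul_right_injective₀ ht).injOn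
  have hsub : G.image (t * ·) ⊆ univ.erase 0 := image_subset_iff.2 fun x hx =>
    mem_erase.2 ⟨mul_ne_zero ht (ne_of_mem_of_not_mem hx hG0), mem_univ _⟩
  have key : (#G : ℝ) * ‖ψ.expSum G t‖ ^ 2 ≤ #G * (Fintype.card F - #G) :=
    calc (#G : ℝ) * ‖ψ.expSum G t‖ ^ 2 = ∑ g ∈ G, ‖ψ.expSum G (t * g)‖ ^ 2 := by
          rw [sum_congr rfl fun g hg => by rw [expSum_mul_of_mem hG0 hGmul hg], sum_const,
            nsmul_eq_mul]
      _ = ∑ b ∈ G.image (t * ·), ‖ψ.expSum G b‖ ^ 2 :=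
          (sum_image (f := fun b => ‖ψ.expSum G b‖ ^ 2) hinj).symm
      _ ≤ ∑ b ∈ univ.erase 0, ‖ψ.expSum G b‖ ^ 2 :=
          sum_le_sum_of_subset_of_nonneg hsub fun _ _ _ => sq_nonneg _
      _ = #G * (Fintype.card F - #G) := by
          simpa [sq, mul_sub, mul_comm] using sum_erase_zero_norm_sq_expSum_mul hψ G one_ne_zero
  exact le_of_mul_le_mul_left key (by exact_mod_cast hne.card_pos)

lemma norm_sum_erase_zero_expSum_mul_le (hψ : ψ.IsPrimitive) (hG0 : (0 : F) ∉ G)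
    (hGmul : ∀ x ∈ G, ∀ y ∈ G, x * y ∈ G) {lam ξ : F} (hlam : lam ≠ 0) (hξ : ξ ≠ 0) :
    ‖∑ t ∈ univ.erase 0,
        ψ.expSum G (lam * t) * ψ.expSum G (-t) * ψ.expSum G (-(ξ * t)) * ψ.expSum G (ξ * t)‖
      ≤ (Fintype.card F - #G) ^ 2 * #G := by
  set q : ℝ := (Fintype.card F : ℝ)
  set S := ψ.expSum G
  have hterm : ∀ t ∈ univ.erase (0 : F),
      ‖S (lam * t) * S (-t) * S (-(ξ * t)) * S (ξ * t)‖
        ≤ (q - #G) * ((‖S (lam * t)‖ ^ 2 + ‖S (1 * t)‖ ^ 2) / 2) := by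
    intro t ht
    have hξt : ‖S (ξ * t)‖ ^ 2 ≤ q - #G :=
      norm_sq_expSum_le hψ hG0 hGmul (mul_ne_zero hξ (ne_of_mem_erase ht))
    rw [norm_mul, norm_mul, norm_mul, norm_expSum_neg, norm_expSum_neg, one_mul]
    nlinarith [sq_nonneg (‖S (lam * t)‖ - ‖S t‖), norm_nonneg (S (lam * t)), norm_nonneg (S t)]
  calc _ ≤ ∑ t ∈ univ.erase 0, (q - #G) * ((‖S (lam * t)‖ ^ 2 + ‖S (1 * t)‖ ^ 2) / 2) :=
        (norm_sum_le _ _).trans (sum_le_sum hterm)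
    _ = (q - #G) ^ 2 * #G := by
        rw [← mul_sum, ← sum_div, sum_add_distrib, sum_erase_zero_norm_sq_expSum_mul hψ G hlam,
          sum_erase_zero_norm_sq_expSum_mul hψ G one_ne_zero]
        ring

end Field

end AddChar

open AddChar

def ratioSolutions {R : Type*} [Mul R] [Sub R] [DecidableEq R] (A : Finset R) (lam ξ : R) :
    Finset (Fin 4 → R) :=
  {x ∈ Fintype.piFinset fun _ => A | lam * x 0 - x 1 = ξ * (x 2 - x 3)}

lemma card_ratioSolutions_le_sq {R : Type*} [Ring R] [DecidableEq R] {A : Finset R}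
    {lam ξ : R} (h : ∀ x ∈ ratioSolutions A lam ξ, x 2 = x 3) :
    #(ratioSolutions A lam ξ) ≤ #A ^ 2 := by
  have hsol {x : Fin 4 → R} (hx : x ∈ ratioSolutions A lam ξ) :
      (∀ i, x i ∈ A) ∧ x 1 = lam * x 0 ∧ x 3 = x 2 := by
    obtain ⟨hA, heq⟩ := mem_filter.1 hx
    have h23 := h x hx
    rw [h23, sub_self, mul_zero, sub_eq_zero] at heq
    exact ⟨Fintype.mem_piFinset.1 hA, heq.symm, h23.symm⟩
  rw [sq, ← card_product]
  refine card_le_card_of_injOn (fun x => (x 0, x 2)) (fun x hx => ?_) (fun x hx y hy hxy => ?_)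
  · exact mem_product.2 ⟨(hsol hx).1 0, (hsol hx).1 2⟩
  · obtain ⟨-, hx1, hx3⟩ := hsol hx
    obtain ⟨-, hy1, hy3⟩ := hsol hy
    obtain ⟨h0, h2⟩ := Prod.mk.inj hxy
    funext i
    fin_cases i <;> simp [h0, h2, hx1, hy1, hx3, hy3]

lemma le_card_mul_card_ratioSolutions {F : Type*} [Field F] [Fintype F] [DecidableEq F]
    {ψ : AddChar F ℂ} (hψ : ψ.IsPrimitive) {G : Finset F} (hG0 : (0 : F) ∉ G)
    (hGmul : ∀ x ∈ G, ∀ y ∈ G, x * y ∈ G) {lam ξ : F} (hlam : lam ≠ 0) (hξ : ξ ≠ 0) :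
    (#G : ℝ) ^ 4 - (Fintype.card F - #G) ^ 2 * #G
      ≤ Fintype.card F * #(ratioSolutions G lam ξ) := by
  have hcount := card_mul_card_filter_sum_mul_eq_zero G hψ ![lam, -1, -ξ, ξ]
  have hsol : {x ∈ Fintype.piFinset fun _ : Fin 4 => G | ∑ i, ![lam, -1, -ξ, ξ] i * x i = 0}
      = ratioSolutions G lam ξ :=
    filter_congr fun x _ => by
      simp only [Fin.sum_univ_four, Fin.isValue, Matrix.cons_val_zero, Matrix.cons_val_one,
        Matrix.cons_val, neg_mul, one_mul]
      constructor <;> intro h <;> linear_combination h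
  simp only [hsol, Fin.prod_univ_four, Fin.isValue, Matrix.cons_val_zero, Matrix.cons_val_one,
    Matrix.cons_val, neg_mul, one_mul] at hcount
  rw [← add_sum_erase _ _ (mem_univ 0)] at hcount
  simp only [mul_zero, neg_zero, expSum_zero] at hcount
  have hE : ∑ t ∈ univ.erase 0,
      ψ.expSum G (lam * t) * ψ.expSum G (-t) * ψ.expSum G (-(ξ * t)) * ψ.expSum G (ξ * t)
        = ((Fintype.card F * #(ratioSolutions G lam ξ) - #G ^ 4 : ℝ) : ℂ) := by
    push_cast
    linear_combination -hcount
  have hbound := norm_sum_erase_zero_expSum_mul_le hψ hG0 hGmul hlam hξ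
  rw [hE, Complex.norm_real, Real.norm_eq_abs] at hbound
  linarith [(abs_le.mp hbound).1]

theorem ratio_representation_general (p : ℕ) [Fact p.Prime] (G : Finset (ZMod p))
    (hG0 : (0 : ZMod p) ∉ G)
    (hGmul : ∀ x ∈ G, ∀ y ∈ G, x * y ∈ G)
    (hcard : (G.card : ℝ) > (p : ℝ) ^ ((2 : ℝ) / 3))
    (lam ξ : ZMod p) (hlam : lam ≠ 0) (hξ : ξ ≠ 0) :
    ∃ u₁ ∈ G, ∃ u₂ ∈ G, ∃ v₁ ∈ G, ∃ v₂ ∈ G,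
      v₁ ≠ v₂ ∧ lam * u₁ - u₂ = ξ * (v₁ - v₂) := by
  by_contra! hdeg
  have hest := le_card_mul_card_ratioSolutions (ZMod.isPrimitive_stdAddChar p) hG0 hGmul hlam hξ
  have hdegenerate : #(ratioSolutions G lam ξ) ≤ #G ^ 2 :=
    card_ratioSolutions_le_sq fun x hx => by
      obtain ⟨hA, heq⟩ := mem_filter.1 hx
      have hA := Fintype.mem_piFinset.1 hA
      by_contra hne
      exact hdeg _ (hA 0) _ (hA 1) _ (hA 2) _ (hA 3) hne heq
  have hGp : (#G : ℝ) ≤ p := by exact_mod_cast ZMod.card p ▸ card_le_univ G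
  have hcube : (p : ℝ) ^ 2 < (#G : ℝ) ^ 3 := by
    calc (p : ℝ) ^ 2 = ((p : ℝ) ^ ((2 : ℝ) / 3)) ^ (3 : ℕ) := by
          rw [← Real.rpow_mul_natCast (Nat.cast_nonneg p)]
          norm_num
      _ < (#G : ℝ) ^ 3 := by gcongr
  rw [ZMod.card] at hest
  have hsq : (#(ratioSolutions G lam ξ) : ℝ) ≤ #G ^ 2 := by exact_mod_cast hdegenerate
  have hn : (0 : ℝ) < #G := by nlinarith
  have hle : (#G : ℝ) ^ 3 ≤ p ^ 2 := by
    nlinarith [mul_le_mul_of_nonneg_left hsq (Nat.cast_nonneg p),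
      mul_le_mul_of_nonneg_left hGp hn.le]
  exact hcube.not_ge hle

/-- If `G ≤ F_p^*` with `|G| > p^{2/3}`, then for every `λ, ξ ∈ F_p^*` there exist
`u₁, u₂, v₁, v₂ ∈ G` with `v₁ ≠ v₂` and `λu₁ − u₂ = ξ(v₁ − v₂)`. -/
theorem ratio_representation (p : ℕ) [Fact p.Prime] (G : Finset (ZMod p))
    (hG0 : (0 : ZMod p) ∉ G) (hG1 : (1 : ZMod p) ∈ G)
    (hGmul : ∀ x ∈ G, ∀ y ∈ G, x * y ∈ G)
    (hcard : (G.card : ℝ) > (p : ℝ) ^ ((2 : ℝ) / 3))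
    (lam ξ : ZMod p) (hlam : lam ≠ 0) (hξ : ξ ≠ 0) :
    ∃ u₁ ∈ G, ∃ u₂ ∈ G, ∃ v₁ ∈ G, ∃ v₂ ∈ G,
      v₁ ≠ v₂ ∧ lam * u₁ - u₂ = ξ * (v₁ - v₂) :=
  ratio_representation_general p G hG0 hGmul hcard lam ξ hlam hξ
end

section
/- Let G be a multiplicative subgroup of F_p^* with |G| > p^{2/3}, and let λ, ξ ∈ F_p^*. Then the number N of quadruples (u1,u2,v1,v2) ∈ G^4 with λu1 − u2 = ξ(v1 − v2) satisfies |N − |G|^4/p| < p|G| − |G|^2. -/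
/-!
Write `S(t) = ∑_{w ∈ G} ψ(t w)` for a primitive additive character `ψ`. Orthogonality of `ψ`
gives `N p = ∑_a S(aλ) S(-a) S(-aξ) S(aξ)`, whose `a = 0` term is `|G|⁴`. Since `S` is constant
on the cosets `tG`, each `|S(a)|²` with `a ≠ 0` occurs `|G|` times in Parseval's identity
`∑_{a ≠ 0} |S(a)|² = p|G| - |G|²`, so `|S(a)|² ≤ p - |G|`. Bounding `|S(aλ) S(-a)|` by this and
summing `|S(aξ)|²` over `a ≠ 0` by Parseval gives `|N p - |G|⁴| ≤ (p - |G|)(p|G| - |G|²)`.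
-/

open Finset

theorem AddChar.card_filter_mul_card_eq_sum {R ι : Type*} [CommRing R] [Fintype R] [DecidableEq R]
    {ψ : AddChar R ℂ} (hψ : ψ.IsPrimitive) (s : Finset ι) (f : ι → R) :
    (#{t ∈ s | f t = 0} : ℂ) * Fintype.card R = ∑ a, ∑ t ∈ s, ψ (a * f t) := by
  rw [sum_comm]
  simp_rw [AddChar.sum_mulShift _ hψ, Nat.cast_ite, Nat.cast_zero]
  rw [← sum_filter, sum_const, nsmul_eq_mul]

theorem Finset.sum_erase_zero_comp_mul_right {F M : Type*} [Field F] [Fintype F] [DecidableEq F]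
    [AddCommGroup M] (f : F → M) {c : F} (hc : c ≠ 0) :
    ∑ a ∈ univ.erase 0, f (a * c) = ∑ a ∈ univ.erase 0, f a := by
  rw [sum_erase_eq_sub (mem_univ _), sum_erase_eq_sub (mem_univ _), zero_mul,
    Fintype.sum_equiv (Equiv.mulRight₀ c hc) (fun a => f (a * c)) f fun _ => rfl]

section ExpSum

variable {F : Type*} [Field F] (ψ : AddChar F ℂ) (G : Finset F)

def expSum (t : F) : ℂ := ∑ w ∈ G, ψ (t * w)

@[simp]
theorem expSum_zero : expSum ψ G 0 = #G := by simp [expSum]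

theorem expSum_neg [Finite F] (t : F) : expSum ψ G (-t) = starRingEnd ℂ (expSum ψ G t) := by
  simp [expSum, map_sum, ← AddChar.map_neg_eq_conj]

theorem norm_expSum_neg [Finite F] (t : F) : ‖expSum ψ G (-t)‖ = ‖expSum ψ G t‖ := by
  rw [expSum_neg, RCLike.norm_conj]

theorem expSum_mul_expSum (x y : F) :
    expSum ψ G x * expSum ψ G y = ∑ w ∈ G ×ˢ G, ψ (x * w.1 + y * w.2) := by
  simp [expSum, sum_mul_sum, sum_product, AddChar.map_add_eq_mul]

variable {ψ G}

theorem expSum_mul_of_mem (hG0 : (0 : F) ∉ G) (hGmul : ∀ x ∈ G, ∀ y ∈ G, x * y ∈ G)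
    {g : F} (hg : g ∈ G) (t : F) : expSum ψ G (t * g) = expSum ψ G t := by
  classical
  have hinj : Function.Injective (g * ·) := mul_right_injective₀ (ne_of_mem_of_not_mem hg hG0)
  have himage : G.image (g * ·) = G :=
    eq_of_subset_of_card_le (image_subset_iff.2 fun w hw => hGmul g hg w hw)
      (card_image_of_injective G hinj).ge
  conv_rhs => rw [expSum, ← himage, sum_image hinj.injOn]
  simp only [expSum, mul_assoc]

variable [Fintype F] [DecidableEq F]

theorem sum_norm_expSum_sq (hψ : ψ.IsPrimitive) :
    ∑ t, ‖expSum ψ G t‖ ^ 2 = Fintype.card F * #G := by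
  have hsq (t : F) : (‖expSum ψ G t‖ : ℂ) ^ 2 = ∑ w ∈ G ×ˢ G, ψ (t * (w.1 - w.2)) := by
    rw [← Complex.mul_conj', ← expSum_neg, expSum_mul_expSum]
    simp only [sub_eq_add_neg, mul_add, mul_neg, neg_mul]
  have hdiag : #{w ∈ G ×ˢ G | w.1 - w.2 = 0} = #G := by
    simp only [sub_eq_zero, ← diag_eq_filter, diag_card]
  have h : ((∑ t, ‖expSum ψ G t‖ ^ 2 : ℝ) : ℂ) = ((Fintype.card F * #G : ℝ) : ℂ) := by
    push_cast
    rw [sum_congr rfl fun t _ => hsq t, ← AddChar.card_filter_mul_card_eq_sum hψ, hdiag, mul_comm]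
  exact_mod_cast h

theorem sum_erase_zero_norm_expSum_sq (hψ : ψ.IsPrimitive) :
    ∑ t ∈ univ.erase 0, ‖expSum ψ G t‖ ^ 2 = Fintype.card F * #G - #G ^ 2 := by
  rw [sum_erase_eq_sub (mem_univ _), sum_norm_expSum_sq hψ, expSum_zero, Complex.norm_natCast]

theorem norm_expSum_sq_le (hψ : ψ.IsPrimitive) (hG0 : (0 : F) ∉ G)
    (hGmul : ∀ x ∈ G, ∀ y ∈ G, x * y ∈ G) {a : F} (ha : a ≠ 0) :
    ‖expSum ψ G a‖ ^ 2 ≤ Fintype.card F - #G := by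
  have hinj : Set.InjOn (a * ·) G := (mul_right_injective₀ ha).injOn
  have hsub : G.image (a * ·) ⊆ univ.erase 0 := fun t ht => by
    obtain ⟨g, hg, rfl⟩ := mem_image.1 ht
    exact mem_erase.2 ⟨mul_ne_zero ha (ne_of_mem_of_not_mem hg hG0), mem_univ _⟩
  have key : #G * ‖expSum ψ G a‖ ^ 2 ≤ #G * (Fintype.card F - #G) :=
    calc #G * ‖expSum ψ G a‖ ^ 2 = ∑ g ∈ G, ‖expSum ψ G (a * g)‖ ^ 2 := by
          rw [sum_congr rfl fun g hg => by rw [expSum_mul_of_mem hG0 hGmul hg], sum_const,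
            nsmul_eq_mul]
      _ = ∑ t ∈ G.image (a * ·), ‖expSum ψ G t‖ ^ 2 :=
          (sum_image (f := fun t => ‖expSum ψ G t‖ ^ 2) hinj).symm
      _ ≤ ∑ t ∈ univ.erase 0, ‖expSum ψ G t‖ ^ 2 :=
          sum_le_sum_of_subset_of_nonneg hsub fun _ _ _ => sq_nonneg _
      _ = #G * (Fintype.card F - #G) := by
          rw [sum_erase_zero_norm_expSum_sq hψ]; ring
  rcases G.eq_empty_or_nonempty with rfl | hne
  · simp [expSum]
  · exact le_of_mul_le_mul_left key (by exact_mod_cast hne.card_pos)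

theorem card_filter_linear_mul_card_eq_sum (hψ : ψ.IsPrimitive) (lam ξ : F) :
    (#{t ∈ G ×ˢ G ×ˢ G ×ˢ G | lam * t.1 - t.2.1 = ξ * (t.2.2.1 - t.2.2.2)} : ℂ)
        * Fintype.card F
      = ∑ a, expSum ψ G (a * lam) * expSum ψ G (-a)
          * (expSum ψ G (-(a * ξ)) * expSum ψ G (a * ξ)) := by
  have hfilter : {t ∈ G ×ˢ G ×ˢ G ×ˢ G | lam * t.1 - t.2.1 = ξ * (t.2.2.1 - t.2.2.2)}
      = {t ∈ G ×ˢ G ×ˢ G ×ˢ G | lam * t.1 - t.2.1 - ξ * (t.2.2.1 - t.2.2.2) = 0} := by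
    simp only [sub_eq_zero]
  rw [hfilter, AddChar.card_filter_mul_card_eq_sum hψ]
  refine sum_congr rfl fun a _ => ?_
  rw [expSum_mul_expSum, expSum_mul_expSum, sum_mul_sum]
  simp only [sum_product, ← AddChar.map_add_eq_mul]
  refine sum_congr rfl fun _ _ => sum_congr rfl fun _ _ => sum_congr rfl fun _ _ =>
    sum_congr rfl fun _ _ => congrArg ψ (by ring)

theorem norm_expSum_mul_norm_expSum_le (hψ : ψ.IsPrimitive) (hG0 : (0 : F) ∉ G)
    (hGmul : ∀ x ∈ G, ∀ y ∈ G, x * y ∈ G) {x y : F} (hx : x ≠ 0) (hy : y ≠ 0) :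
    ‖expSum ψ G x‖ * ‖expSum ψ G y‖ ≤ Fintype.card F - #G := by
  nlinarith [norm_expSum_sq_le hψ hG0 hGmul hx, norm_expSum_sq_le hψ hG0 hGmul hy,
    sq_nonneg (‖expSum ψ G x‖ - ‖expSum ψ G y‖)]

theorem abs_card_filter_linear_mul_card_sub_le (hψ : ψ.IsPrimitive) (hG0 : (0 : F) ∉ G)
    (hGmul : ∀ x ∈ G, ∀ y ∈ G, x * y ∈ G) {lam ξ : F} (hlam : lam ≠ 0) (hξ : ξ ≠ 0) :
    |(#{t ∈ G ×ˢ G ×ˢ G ×ˢ G | lam * t.1 - t.2.1 = ξ * (t.2.2.1 - t.2.2.2)} : ℝ)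
        * Fintype.card F - #G ^ 4|
      ≤ (Fintype.card F - #G) * (Fintype.card F * #G - #G ^ 2) := by
  set N := #{t ∈ G ×ˢ G ×ˢ G ×ˢ G | lam * t.1 - t.2.1 = ξ * (t.2.2.1 - t.2.2.2)}
  set S := expSum ψ G
  have hsplit : (N : ℂ) * Fintype.card F - #G ^ 4
      = ∑ a ∈ univ.erase 0, S (a * lam) * S (-a) * (S (-(a * ξ)) * S (a * ξ)) := by
    rw [card_filter_linear_mul_card_eq_sum hψ, ← add_sum_erase _ _ (mem_univ 0)]
    simp only [zero_mul, neg_zero, S, expSum_zero]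
    ring
  have hterm (a : F) (ha : a ∈ univ.erase 0) :
      ‖S (a * lam) * S (-a) * (S (-(a * ξ)) * S (a * ξ))‖
        ≤ (Fintype.card F - #G) * ‖S (a * ξ)‖ ^ 2 := by
    have ha0 := ne_of_mem_erase ha
    rw [norm_mul, norm_mul, norm_mul, norm_expSum_neg, norm_expSum_neg, ← sq]
    exact mul_le_mul_of_nonneg_right
      (norm_expSum_mul_norm_expSum_le hψ hG0 hGmul (mul_ne_zero ha0 hlam) ha0) (sq_nonneg _)
  calc |(N : ℝ) * Fintype.card F - #G ^ 4|
      = ‖(N : ℂ) * Fintype.card F - #G ^ 4‖ := by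
        rw [← Real.norm_eq_abs, ← Complex.norm_real]; push_cast; rfl
    _ ≤ ∑ a ∈ univ.erase 0, (Fintype.card F - #G) * ‖S (a * ξ)‖ ^ 2 := by
        rw [hsplit]; exact (norm_sum_le _ _).trans (sum_le_sum hterm)
    _ = (Fintype.card F - #G) * (Fintype.card F * #G - #G ^ 2) := by
        rw [← mul_sum, sum_erase_zero_comp_mul_right (fun t => ‖S t‖ ^ 2) hξ,
          sum_erase_zero_norm_expSum_sq hψ]

end ExpSum

theorem quadruple_count_asymptotic_general (p : ℕ) [Fact p.Prime] (G : Finset (ZMod p))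
    (hG0 : (0 : ZMod p) ∉ G) (hG1 : (1 : ZMod p) ∈ G)
    (hGmul : ∀ x ∈ G, ∀ y ∈ G, x * y ∈ G)
    (lam ξ : ZMod p) (hlam : lam ≠ 0) (hξ : ξ ≠ 0) :
    |(((G ×ˢ G ×ˢ G ×ˢ G).filter (fun t =>
        lam * t.1 - t.2.1 = ξ * (t.2.2.1 - t.2.2.2))).card : ℝ)
      - (G.card : ℝ)^4 / (p : ℝ)|
      < (p : ℝ) * (G.card : ℝ) - (G.card : ℝ)^2 := by
  have hbound := abs_card_filter_linear_mul_card_sub_le (ZMod.isPrimitive_stdAddChar p) hG0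
    hGmul hlam hξ
  rw [ZMod.card] at hbound
  have hG : (0 : ℝ) < #G := by exact_mod_cast card_pos.2 ⟨1, hG1⟩
  have hGp : (#G : ℝ) < p := by exact_mod_cast ZMod.card p ▸ card_lt_univ_of_notMem hG0
  have hp : (0 : ℝ) < p := hG.trans hGp
  have hgap : (0 : ℝ) < p * #G - #G ^ 2 := by nlinarith
  rw [sub_div' hp.ne', abs_div, abs_of_pos hp, div_lt_iff₀ hp]
  exact hbound.trans_lt (by nlinarith [mul_pos hG hgap])

/-- If `G ≤ F_p^*` with `|G| > p^{2/3}` and `λ, ξ ∈ F_p^*`, then the number `N` of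
quadruples `(u₁,u₂,v₁,v₂) ∈ G⁴` with `λu₁ − u₂ = ξ(v₁ − v₂)` satisfies
`|N − |G|⁴/p| < p|G| − |G|²`. -/
theorem quadruple_count_asymptotic (p : ℕ) [Fact p.Prime] (G : Finset (ZMod p))
    (hG0 : (0 : ZMod p) ∉ G) (hG1 : (1 : ZMod p) ∈ G)
    (hGmul : ∀ x ∈ G, ∀ y ∈ G, x * y ∈ G)
    (hcard : (G.card : ℝ) > (p : ℝ) ^ ((2 : ℝ) / 3))
    (lam ξ : ZMod p) (hlam : lam ≠ 0) (hξ : ξ ≠ 0) :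
    |(((G ×ˢ G ×ˢ G ×ˢ G).filter (fun t =>
        lam * t.1 - t.2.1 = ξ * (t.2.2.1 - t.2.2.2))).card : ℝ)
      - (G.card : ℝ)^4 / (p : ℝ)|
      < (p : ℝ) * (G.card : ℝ) - (G.card : ℝ)^2 :=
  quadruple_count_asymptotic_general p G hG0 hG1 hGmul lam ξ hlam hξ
end

section
/- Let G ≤ F_p^* be a multiplicative subgroup, λ ∈ F_p^*, Δ ≥ 3 a real parameter. Then T_λ(G) − |G|^6/p ≪ |G|^4 + Δ|G|^2 p + W, where W = Σ over (a,b) ∈ F_p^2 with ι_G(ℓ_{a,b}) > Δ of ι_G(ℓ_{a,b})·(ι_G(ℓ_{a,λb}) − |G|^2/p)^2, and ι_G(ℓ_{a,b}) = |{(x,y) ∈ G×G : y = ax+b}|. -/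
open Finset

/-!
Write a sextuple as `((u₁, v₁, w₁), (u₂, v₂, w₂))`. Its defining equation says that the points
`(u₂, u₁)`, `(λv₂, v₁)`, `(λw₂, w₁)` lie on one line `Y = sX + c` with `s ≠ 0` and `u₂ ≠ λw₂`,
i.e. that `(u₂, u₁) ∈ ℓ_{s,c}` and `(v₂, v₁), (w₂, w₁) ∈ ℓ_{λs,c}`. Summing over lines, with the
slope `s = 0` contributing `|G|⁴` and the triples with `u₂ = λw₂` at most `ι(ℓ_{s,c}) ι(ℓ_{λs,c})`
each, `T_λ(G) = Σ ι(ℓ_{s,c}) ι(ℓ_{λs,c})² - |G|⁴ - E` with `0 ≤ E ≤ Σ ι² ≤ |G|⁴ + p|G|²`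
(two distinct points lie on at most one line).

Write `ι = μ + D` with `μ = |G|²/p` the mean, so `Σ D = 0` and `Σ D² ≤ p|G|²`. Expanding
`(μ + D)(μ + D')²` leaves the main term `p²μ³ = |G|⁶/p`, terms bounded by `μ Σ D² ≤ |G|⁴`, and
`Σ D D'²`, which is split by the size of `ι`: `|D| ≤ Δ + μ` when `ι ≤ Δ` and `|D| ≤ ι + μ`
otherwise. Finally `(x, y) ↦ (1/x, y/x)` maps `(G × G) ∩ ℓ_{s,c}` onto `(G × G) ∩ ℓ_{c,s}`, which
turns the twist `s ↦ λs` of the slope into the twist `b ↦ λb` of the intercept in the statement.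
-/

section Moments

variable {X : Type*} [Fintype X] (σ : Equiv.Perm X)

lemma abs_sum_mul_comp_le_sum_sq (g : X → ℝ) :
    |∑ x, g x * g (σ x)| ≤ ∑ x, g x ^ 2 := by
  have hσ : ∑ x, g (σ x) ^ 2 = ∑ x, g x ^ 2 := Equiv.sum_comp σ (fun x => g x ^ 2)
  calc |∑ x, g x * g (σ x)| ≤ ∑ x, |g x * g (σ x)| := abs_sum_le_sum_abs _ _
    _ ≤ ∑ x, (g x ^ 2 + g (σ x) ^ 2) / 2 := by
        gcongr with x
        rw [abs_mul, ← sq_abs (g x), ← sq_abs (g (σ x))]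
        nlinarith [two_mul_le_add_sq |g x| |g (σ x)|]
    _ = ∑ x, g x ^ 2 := by rw [← sum_div, sum_add_distrib, hσ]; ring

lemma abs_sub_le_add_ite {a μ Δ : ℝ} (ha : 0 ≤ a) (hμ : 0 ≤ μ) (hΔ : 0 ≤ Δ) :
    |a - μ| ≤ Δ + μ + if Δ < a then a else 0 := by
  split_ifs <;> rw [abs_le] <;> constructor <;> linarith

variable (f : X → ℝ) (μ : ℝ)

lemma sum_mul_sq_comp_eq (hmean : ∑ x, (f x - μ) = 0) :
    ∑ x, f x * f (σ x) ^ 2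
      = Fintype.card X * μ ^ 3 + μ * ∑ x, (f x - μ) ^ 2
        + 2 * μ * ∑ x, (f x - μ) * (f (σ x) - μ) + ∑ x, (f x - μ) * (f (σ x) - μ) ^ 2 := by
  have hmean' : ∑ x, (f (σ x) - μ) = 0 := (Equiv.sum_comp σ (fun x => f x - μ)).trans hmean
  have hvar : ∑ x, (f (σ x) - μ) ^ 2 = ∑ x, (f x - μ) ^ 2 :=
    Equiv.sum_comp σ (fun x => (f x - μ) ^ 2)
  have expand : ∀ x, f x * f (σ x) ^ 2
      = μ ^ 3 + μ ^ 2 * (f x - μ) + 2 * μ ^ 2 * (f (σ x) - μ) + μ * (f (σ x) - μ) ^ 2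
        + 2 * μ * ((f x - μ) * (f (σ x) - μ)) + (f x - μ) * (f (σ x) - μ) ^ 2 := fun x => by
    ring
  simp only [expand, sum_add_distrib, ← mul_sum, hmean, hmean', hvar, sum_const, card_univ,
    nsmul_eq_mul]
  ring

lemma sum_sub_sq_eq (hmean : ∑ x, (f x - μ) = 0) :
    ∑ x, (f x - μ) ^ 2 = ∑ x, f x ^ 2 - Fintype.card X * μ ^ 2 := by
  have expand : ∀ x, (f x - μ) ^ 2 = f x ^ 2 - 2 * μ * (f x - μ) - μ ^ 2 := fun x => by ring
  simp only [expand, sum_sub_distrib, ← mul_sum, hmean, sum_const, card_univ, nsmul_eq_mul]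
  ring

lemma abs_sum_sub_mul_sq_comp_le (hf : ∀ x, 0 ≤ f x) (hμ : 0 ≤ μ) {Δ : ℝ} (hΔ : 0 ≤ Δ) :
    |∑ x, (f x - μ) * (f (σ x) - μ) ^ 2|
      ≤ (Δ + μ) * ∑ x, (f x - μ) ^ 2
        + ∑ x, if Δ < f x then f x * (f (σ x) - μ) ^ 2 else 0 := by
  have hvar : ∑ x, (f (σ x) - μ) ^ 2 = ∑ x, (f x - μ) ^ 2 :=
    Equiv.sum_comp σ (fun x => (f x - μ) ^ 2)
  calc |∑ x, (f x - μ) * (f (σ x) - μ) ^ 2|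
      ≤ ∑ x, |f x - μ| * (f (σ x) - μ) ^ 2 := by
        refine (abs_sum_le_sum_abs _ _).trans (le_of_eq ?_)
        simp only [abs_mul, abs_sq]
    _ ≤ ∑ x, (Δ + μ + if Δ < f x then f x else 0) * (f (σ x) - μ) ^ 2 := by
        gcongr with x
        exact abs_sub_le_add_ite (hf x) hμ hΔ
    _ = _ := by
        simp only [add_mul, ite_mul, zero_mul, sum_add_distrib, ← mul_sum, hvar]

theorem abs_sum_mul_sq_comp_sub_le (hf : ∀ x, 0 ≤ f x) (hμ : 0 ≤ μ)
    (hmean : ∑ x, (f x - μ) = 0) {Δ : ℝ} (hΔ : 0 ≤ Δ) :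
    |∑ x, f x * f (σ x) ^ 2 - Fintype.card X * μ ^ 3|
      ≤ (4 * μ + Δ) * ∑ x, (f x - μ) ^ 2
        + ∑ x, if Δ < f x then f x * (f (σ x) - μ) ^ 2 else 0 := by
  obtain ⟨hcov₁, hcov₂⟩ := abs_le.mp (abs_sum_mul_comp_le_sum_sq σ (fun x => f x - μ))
  obtain ⟨hskew₁, hskew₂⟩ := abs_le.mp (abs_sum_sub_mul_sq_comp_le σ f μ hf hμ hΔ)
  have := mul_le_mul_of_nonneg_left hcov₁ hμ
  have := mul_le_mul_of_nonneg_left hcov₂ hμ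
  have : 0 ≤ μ * ∑ x, (f x - μ) ^ 2 := mul_nonneg hμ (sum_nonneg fun x _ => sq_nonneg _)
  rw [sum_mul_sq_comp_eq σ f μ hmean, abs_le]
  constructor <;> linarith

end Moments

lemma pow_mem_of_mul_mem {M : Type*} [Monoid M] {G : Finset M} (h1 : 1 ∈ G)
    (hmul : ∀ x ∈ G, ∀ y ∈ G, x * y ∈ G) {x : M} (hx : x ∈ G) (n : ℕ) : x ^ n ∈ G := by
  induction n with
  | zero => simpa using h1
  | succ n ih => simpa [pow_succ] using hmul _ ih _ hx

lemma inv_mem_of_mul_mem {K : Type*} [GroupWithZero K] [Fintype K] {G : Finset K}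
    (h0 : (0 : K) ∉ G) (h1 : 1 ∈ G) (hmul : ∀ x ∈ G, ∀ y ∈ G, x * y ∈ G) {x : K} (hx : x ∈ G) :
    x⁻¹ ∈ G := by
  have hx0 : x ≠ 0 := ne_of_mem_of_not_mem hx h0
  have hcard := Fintype.one_lt_card (α := K)
  have : x * x ^ (Fintype.card K - 2) = 1 := by
    rw [← pow_succ', ← FiniteField.pow_card_sub_one_eq_one x hx0]
    congr 1
    omega
  rw [inv_eq_of_mul_eq_one_right this]
  exact pow_mem_of_mul_mem h1 hmul hx _

section LinePoints

variable {F : Type*} [Field F]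

lemma collinear_and_line_iff {lam s c u₁ v₁ w₁ u₂ v₂ w₂ : F} (hs : s ≠ 0) :
    ((u₁ - w₁ ≠ 0 ∧ u₂ - lam * w₂ ≠ 0 ∧
        (u₁ - v₁) / (u₁ - w₁) = (u₂ - lam * v₂) / (u₂ - lam * w₂)) ∧
      (u₁ - w₁) / (u₂ - lam * w₂) = s ∧ u₁ - (u₁ - w₁) / (u₂ - lam * w₂) * u₂ = c) ↔
    (u₁ = s * u₂ + c ∧ v₁ = lam * s * v₂ + c ∧ w₁ = lam * s * w₂ + c) ∧ u₂ ≠ lam * w₂ := by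
  constructor
  · rintro ⟨⟨hw, hd, hratio⟩, hslope, hc⟩
    rw [hslope] at hc
    rw [div_eq_iff hd] at hslope
    rw [div_eq_div_iff hw hd, hslope] at hratio
    have hv : u₁ - v₁ = s * (u₂ - lam * v₂) := mul_right_cancel₀ hd (by linear_combination hratio)
    exact ⟨⟨by linear_combination hc, by linear_combination hc - hv,
      by linear_combination hc - hslope⟩, sub_ne_zero.mp hd⟩
  · rintro ⟨⟨hu, hv, hw⟩, hne⟩
    have hd : u₂ - lam * w₂ ≠ 0 := sub_ne_zero.mpr hne
    have hslope : u₁ - w₁ = s * (u₂ - lam * w₂) := by rw [hu, hw]; ring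
    have hnum : u₁ - v₁ = s * (u₂ - lam * v₂) := by rw [hu, hv]; ring
    refine ⟨⟨?_, hd, ?_⟩, ?_, ?_⟩
    · rw [hslope]; exact mul_ne_zero hs hd
    · rw [hslope, hnum, mul_div_mul_left _ _ hs]
    · rw [hslope, mul_div_cancel_right₀ _ hd]
    · rw [hslope, mul_div_cancel_right₀ _ hd]; linear_combination hu

variable [DecidableEq F]

def linePoints (G : Finset F) (a b : F) : Finset (F × F) :=
  {xy ∈ G ×ˢ G | xy.2 = a * xy.1 + b}

def collinearSextuples (G : Finset F) (lam : F) : Finset ((F × F × F) × (F × F × F)) :=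
  {t ∈ (G ×ˢ G ×ˢ G) ×ˢ (G ×ˢ G ×ˢ G) | t.1.1 - t.1.2.2 ≠ 0 ∧ t.2.1 - lam * t.2.2.2 ≠ 0 ∧
    (t.1.1 - t.1.2.1) / (t.1.1 - t.1.2.2) = (t.2.1 - lam * t.2.2.1) / (t.2.1 - lam * t.2.2.2)}

/-- The line `Y = sX + c`, as `(s, c)`, through `(u₂, u₁)` and `(λw₂, w₁)`. -/
def sextupleLine (lam : F) (t : (F × F × F) × (F × F × F)) : F × F :=
  ((t.1.1 - t.1.2.2) / (t.2.1 - lam * t.2.2.2),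
    t.1.1 - (t.1.1 - t.1.2.2) / (t.2.1 - lam * t.2.2.2) * t.2.1)

def twistedTriples (G : Finset F) (lam s c : F) : Finset ((F × F) × (F × F) × (F × F)) :=
  {x ∈ linePoints G s c ×ˢ linePoints G (lam * s) c ×ˢ linePoints G (lam * s) c |
    x.1.1 ≠ lam * x.2.2.1}

variable {G : Finset F}

lemma mapsTo_linePoints_swap (h0 : (0 : F) ∉ G) (hmul : ∀ x ∈ G, ∀ y ∈ G, x * y ∈ G)
    (hinv : ∀ x ∈ G, x⁻¹ ∈ G) (a b : F) :
    Set.MapsTo (fun P : F × F => (P.1⁻¹, P.2 * P.1⁻¹)) (linePoints G a b) (linePoints G b a) := by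
  intro P hP
  simp only [linePoints, mem_coe, mem_filter, mem_product] at hP ⊢
  obtain ⟨⟨hx, hy⟩, hline⟩ := hP
  have hx0 : P.1 ≠ 0 := ne_of_mem_of_not_mem hx h0
  refine ⟨⟨hinv _ hx, hmul _ hy _ (hinv _ hx)⟩, ?_⟩
  rw [hline]
  field_simp
  ring

lemma card_linePoints_comm (h0 : (0 : F) ∉ G) (hmul : ∀ x ∈ G, ∀ y ∈ G, x * y ∈ G)
    (hinv : ∀ x ∈ G, x⁻¹ ∈ G) (a b : F) :
    #(linePoints G a b) = #(linePoints G b a) := by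
  have hinvol : ∀ c d : F, Set.LeftInvOn (fun P : F × F => (P.1⁻¹, P.2 * P.1⁻¹))
      (fun P : F × F => (P.1⁻¹, P.2 * P.1⁻¹)) (linePoints G c d) := by
    intro c d P hP
    simp only [linePoints, mem_coe, mem_filter, mem_product] at hP
    have hx0 : P.1 ≠ 0 := ne_of_mem_of_not_mem hP.1.1 h0
    simp [mul_assoc, inv_mul_cancel₀ hx0]
  exact card_nbij' _ _ (mapsTo_linePoints_swap h0 hmul hinv a b)
    (mapsTo_linePoints_swap h0 hmul hinv b a) (hinvol a b) (hinvol b a)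

variable (G) (lam : F)

lemma card_linePoints_zero_left (c : F) :
    #(linePoints G 0 c) = if c ∈ G then #G else 0 := by
  have : linePoints G 0 c = G ×ˢ {y ∈ G | y = c} := by
    simp only [linePoints, zero_mul, zero_add]
    exact filter_product_right (· = c)
  rw [this, card_product, filter_eq']
  split_ifs <;> simp

lemma filter_sextupleLine_eq_empty (c : F) :
    {t ∈ collinearSextuples G lam | sextupleLine lam t = (0, c)} = ∅ := by
  refine filter_eq_empty_iff.mpr fun t ht hline => ?_
  obtain ⟨-, hw, hd, -⟩ := mem_filter.mp ht
  exact div_ne_zero hw hd (congrArg Prod.fst hline)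

lemma card_filter_sextupleLine_eq {s : F} (hs : s ≠ 0) (c : F) :
    #{t ∈ collinearSextuples G lam | sextupleLine lam t = (s, c)} = #(twistedTriples G lam s c) := by
  refine card_nbij' (fun t => ((t.2.1, t.1.1), (t.2.2.1, t.1.2.1), (t.2.2.2, t.1.2.2)))
    (fun x => ((x.1.2, x.2.1.2, x.2.2.2), (x.1.1, x.2.1.1, x.2.2.1)))
    ?_ ?_ (fun _ _ => rfl) (fun _ _ => rfl)
  · rintro ⟨⟨u₁, v₁, w₁⟩, u₂, v₂, w₂⟩ ht
    simp only [collinearSextuples, twistedTriples, linePoints, sextupleLine, mem_coe, mem_filter,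
      mem_product, Prod.mk.injEq] at ht ⊢
    obtain ⟨⟨⟨⟨hu₁, hv₁, hw₁⟩, hu₂, hv₂, hw₂⟩, hcol⟩, hline⟩ := ht
    obtain ⟨⟨hu, hv, hw⟩, hne⟩ := (collinear_and_line_iff hs).mp ⟨hcol, hline⟩
    exact ⟨⟨⟨⟨hu₂, hu₁⟩, hu⟩, ⟨⟨hv₂, hv₁⟩, hv⟩, ⟨hw₂, hw₁⟩, hw⟩, hne⟩
  · rintro ⟨⟨u₂, u₁⟩, ⟨v₂, v₁⟩, w₂, w₁⟩ hx
    simp only [collinearSextuples, twistedTriples, linePoints, sextupleLine, mem_coe, mem_filter,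
      mem_product, Prod.mk.injEq] at hx ⊢
    obtain ⟨⟨⟨⟨hu₂, hu₁⟩, hu⟩, ⟨⟨hv₂, hv₁⟩, hv⟩, ⟨hw₂, hw₁⟩, hw⟩, hne⟩ := hx
    obtain ⟨hcol, hline⟩ := (collinear_and_line_iff hs).mpr ⟨⟨hu, hv, hw⟩, hne⟩
    exact ⟨⟨⟨⟨hu₁, hv₁, hw₁⟩, hu₂, hv₂, hw₂⟩, hcol⟩, hline⟩

lemma card_twistedTriples_le (s c : F) :
    #(twistedTriples G lam s c) ≤ #(linePoints G s c) * #(linePoints G (lam * s) c) ^ 2 :=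
  (card_filter_le _ _).trans_eq (by rw [card_product, card_product, sq])

lemma le_card_twistedTriples_add (hlam : lam ≠ 0) (s c : F) :
    #(linePoints G s c) * #(linePoints G (lam * s) c) ^ 2
      ≤ #(twistedTriples G lam s c) + #(linePoints G s c) * #(linePoints G (lam * s) c) := by
  have hsplit := card_filter_add_card_filter_not (s := linePoints G s c ×ˢ
    linePoints G (lam * s) c ×ˢ linePoints G (lam * s) c) (fun x => x.1.1 ≠ lam * x.2.2.1)
  have hdegenerate : #{x ∈ linePoints G s c ×ˢ linePoints G (lam * s) c ×ˢ
      linePoints G (lam * s) c | ¬x.1.1 ≠ lam * x.2.2.1}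
      ≤ #(linePoints G s c ×ˢ linePoints G (lam * s) c) := by
    refine card_le_card_of_injOn (fun x => (x.1, x.2.1)) (fun x hx => ?_) fun x hx y hy hxy => ?_
    · simp only [mem_coe, mem_filter, mem_product] at hx ⊢
      exact ⟨hx.1.1, hx.1.2.1⟩
    · simp only [mem_coe, mem_filter, mem_product, linePoints, not_not] at hx hy
      simp only [Prod.mk.injEq] at hxy
      have hx₁ : x.2.2.1 = y.2.2.1 := mul_left_cancel₀ hlam (by rw [← hx.2, ← hy.2, hxy.1])
      exact Prod.ext hxy.1 (Prod.ext hxy.2 (Prod.ext hx₁ (by rw [hx.1.2.2.2, hy.1.2.2.2, hx₁])))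
  simp only [card_product] at hsplit hdegenerate
  rw [twistedTriples]
  linarith

variable [Fintype F]

lemma sum_card_linePoints (a : F) : ∑ b, #(linePoints G a b) = #G ^ 2 := by
  rw [sq, ← card_product, card_eq_sum_card_fiberwise (f := fun xy : F × F => xy.2 - a * xy.1)
    (t := univ) (fun _ _ => mem_univ _)]
  refine sum_congr rfl fun b _ => congrArg card (filter_congr fun xy _ => ?_)
  exact sub_eq_iff_eq_add'.symm

lemma card_lines_through_le (P Q : F × F) :
    #{ab : F × F | P.2 = ab.1 * P.1 + ab.2 ∧ Q.2 = ab.1 * Q.1 + ab.2}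
      ≤ if P = Q then Fintype.card F else 1 := by
  split_ifs with hPQ
  · refine (card_le_card_of_injOn Prod.fst (fun _ _ => mem_coe.mpr (mem_univ _))
      fun ab hab ab' hab' h => ?_).trans_eq card_univ
    simp only [mem_coe, mem_filter, mem_univ, true_and] at hab hab'
    exact Prod.ext h (by linear_combination hab'.1 - hab.1 - P.1 * h)
  · refine card_le_one.mpr fun ab hab ab' hab' => ?_
    simp only [mem_filter, mem_univ, true_and] at hab hab'
    have hslope : (ab.1 - ab'.1) * (P.1 - Q.1) = 0 := by
      linear_combination hab'.1 - hab.1 - hab'.2 + hab.2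
    have hx : P.1 ≠ Q.1 := fun hx => hPQ (Prod.ext hx (by rw [hab.1, hab.2, hx]))
    have ha : ab.1 = ab'.1 := sub_eq_zero.mp ((mul_eq_zero.mp hslope).resolve_right
      (sub_ne_zero.mpr hx))
    exact Prod.ext ha (by linear_combination hab'.1 - hab.1 - P.1 * ha)

lemma sum_sum_card_linePoints_sq_le :
    ∑ a, ∑ b, #(linePoints G a b) ^ 2 ≤ #G ^ 4 + Fintype.card F * #G ^ 2 := by
  let onLine : F × F → (F × F) × (F × F) → Prop := fun ab PQ =>
    PQ.1.2 = ab.1 * PQ.1.1 + ab.2 ∧ PQ.2.2 = ab.1 * PQ.2.1 + ab.2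
  calc ∑ a, ∑ b, #(linePoints G a b) ^ 2
      = ∑ ab : F × F, #(bipartiteAbove onLine ((G ×ˢ G) ×ˢ (G ×ˢ G)) ab) := by
        rw [Fintype.sum_prod_type]
        refine sum_congr rfl fun a _ => sum_congr rfl fun b _ => ?_
        rw [sq, ← card_product, linePoints, ← filter_product]
        rfl
    _ = ∑ PQ ∈ (G ×ˢ G) ×ˢ (G ×ˢ G), #(bipartiteBelow onLine univ PQ) :=
        sum_card_bipartiteAbove_eq_sum_card_bipartiteBelow onLine
    _ ≤ ∑ PQ ∈ (G ×ˢ G) ×ˢ (G ×ˢ G), ((if PQ.1 = PQ.2 then Fintype.card F else 0) + 1) := by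
        gcongr with PQ
        refine (card_lines_through_le PQ.1 PQ.2).trans ?_
        split_ifs <;> simp
    _ = #G ^ 4 + Fintype.card F * #G ^ 2 := by
        rw [sum_add_distrib, sum_product, sum_const, card_product, card_product]
        simp only [sum_ite_eq, smul_eq_mul, mul_one, sum_ite_mem, inter_self,
          sum_const, card_product]
        ring

lemma card_collinearSextuples :
    #(collinearSextuples G lam) = ∑ s ∈ univ.erase 0, ∑ c, #(twistedTriples G lam s c) := by
  rw [card_eq_sum_card_fiberwise (f := sextupleLine lam) (t := univ) fun _ _ => mem_univ _,
    Fintype.sum_prod_type, ← add_sum_erase _ _ (mem_univ 0)]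
  simp only [filter_sextupleLine_eq_empty, card_empty, sum_const_zero, zero_add]
  exact sum_congr rfl fun s hs => sum_congr rfl fun c _ =>
    card_filter_sextupleLine_eq G lam (ne_of_mem_erase hs) c

lemma sum_card_linePoints_zero_pow_three : ∑ c, #(linePoints G 0 c) ^ 3 = #G ^ 4 := by
  simp only [card_linePoints_zero_left, ite_pow, ne_eq, OfNat.ofNat_ne_zero, not_false_eq_true,
    zero_pow, sum_ite_mem, univ_inter, sum_const, smul_eq_mul]
  ring

lemma card_collinearSextuples_add_le :
    #(collinearSextuples G lam) + #G ^ 4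
      ≤ ∑ s, ∑ c, #(linePoints G s c) * #(linePoints G (lam * s) c) ^ 2 := by
  rw [card_collinearSextuples, ← add_sum_erase _ _ (mem_univ 0), mul_zero]
  simp only [← pow_succ', sum_card_linePoints_zero_pow_three]
  rw [add_comm]
  gcongr with s _ c
  exact card_twistedTriples_le G lam s c

lemma le_card_collinearSextuples_add (hlam : lam ≠ 0) :
    ∑ s, ∑ c, #(linePoints G s c) * #(linePoints G (lam * s) c) ^ 2
      ≤ #(collinearSextuples G lam) + #G ^ 4
        + ∑ s, ∑ c, #(linePoints G s c) * #(linePoints G (lam * s) c) := by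
  rw [card_collinearSextuples, ← add_sum_erase _ _ (mem_univ 0), mul_zero]
  simp only [← pow_succ', sum_card_linePoints_zero_pow_three]
  calc #G ^ 4 + ∑ s ∈ univ.erase 0, ∑ c, #(linePoints G s c) * #(linePoints G (lam * s) c) ^ 2
      ≤ #G ^ 4 + ∑ s ∈ univ.erase 0, ∑ c,
          (#(twistedTriples G lam s c) + #(linePoints G s c) * #(linePoints G (lam * s) c)) := by
        gcongr with s _ c
        exact le_card_twistedTriples_add G lam hlam s c
    _ ≤ _ := by
        rw [sum_congr rfl fun s _ => sum_add_distrib, sum_add_distrib]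
        have := sum_le_sum_of_subset (f := fun s => ∑ c, #(linePoints G s c) *
          #(linePoints G (lam * s) c)) (erase_subset (0 : F) univ)
        omega

lemma sum_card_linePoints_mul_le (hlam : lam ≠ 0) :
    ∑ s, ∑ c, (#(linePoints G s c) : ℝ) * #(linePoints G (lam * s) c)
      ≤ #G ^ 4 + Fintype.card F * #G ^ 2 := by
  have h := abs_sum_mul_comp_le_sum_sq ((Equiv.mulLeft₀ lam hlam).prodCongr (Equiv.refl F))
    fun x => (#(linePoints G x.1 x.2) : ℝ)
  have hsq : ∑ s, ∑ c, (#(linePoints G s c) : ℝ) ^ 2 ≤ #G ^ 4 + Fintype.card F * #G ^ 2 := by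
    exact_mod_cast sum_sum_card_linePoints_sq_le G
  simp only [Fintype.sum_prod_type] at h
  exact (le_abs_self _).trans (h.trans hsq)

lemma abs_sum_card_linePoints_mul_sq_sub_le (hlam : lam ≠ 0) {Δ : ℝ} (hΔ : 0 ≤ Δ) :
    |∑ s, ∑ c, (#(linePoints G s c) : ℝ) * #(linePoints G (lam * s) c) ^ 2
        - #G ^ 6 / Fintype.card F|
      ≤ 4 * #G ^ 4 + Δ * #G ^ 2 * Fintype.card F
        + ∑ s, ∑ c, if Δ < (#(linePoints G s c) : ℝ) then
            (#(linePoints G s c) : ℝ) * (#(linePoints G (lam * s) c) - #G ^ 2 / Fintype.card F) ^ 2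
          else 0 := by
  have hq : (0 : ℝ) < Fintype.card F := Nat.cast_pos.mpr Fintype.card_pos
  let f : F × F → ℝ := fun x => #(linePoints G x.1 x.2)
  have hmean : ∑ x, (f x - #G ^ 2 / Fintype.card F) = 0 := by
    have hrow : ∀ s, ∑ c, (#(linePoints G s c) : ℝ) = #G ^ 2 := fun s => by
      exact_mod_cast sum_card_linePoints G s
    simp only [f, Fintype.sum_prod_type, sum_sub_distrib, hrow, sum_const, card_univ,
      Fintype.card_prod, nsmul_eq_mul]
    push_cast
    field_simp
    ring
  have hvar : ∑ x, (f x - #G ^ 2 / Fintype.card F) ^ 2 ≤ Fintype.card F * #G ^ 2 := by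
    have hsq : ∑ s, ∑ c, (#(linePoints G s c) : ℝ) ^ 2 ≤ #G ^ 4 + Fintype.card F * #G ^ 2 := by
      exact_mod_cast sum_sum_card_linePoints_sq_le G
    rw [sum_sub_sq_eq f _ hmean, Fintype.card_prod, Fintype.sum_prod_type]
    have : ((Fintype.card F * Fintype.card F : ℕ) : ℝ) * (#G ^ 2 / Fintype.card F) ^ 2
        = #G ^ 4 := by
      push_cast; field_simp
    linarith
  have h := abs_sum_mul_sq_comp_sub_le ((Equiv.mulLeft₀ lam hlam).prodCongr (Equiv.refl F)) f _
    (fun _ => Nat.cast_nonneg _) (by positivity) hmean hΔ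
  have hcube : ((Fintype.card (F × F) : ℕ) : ℝ) * (#G ^ 2 / Fintype.card F) ^ 3
      = #G ^ 6 / Fintype.card F := by
    rw [Fintype.card_prod]; push_cast; field_simp
  have hspread : (4 * (#G ^ 2 / Fintype.card F) + Δ) * (Fintype.card F * #G ^ 2)
      = 4 * #G ^ 4 + Δ * #G ^ 2 * Fintype.card F := by
    field_simp
  have hV := mul_le_mul_of_nonneg_left hvar
    (by positivity : 0 ≤ 4 * ((#G : ℝ) ^ 2 / Fintype.card F) + Δ)
  rw [hcube] at h
  simp only [f, Fintype.sum_prod_type, Equiv.prodCongr_apply, Prod.map, Equiv.mulLeft₀_apply,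
    Equiv.refl_apply] at h hV
  linarith

lemma sum_sum_comp_card_linePoints_swap {M : Type*} [AddCommMonoid M] (h0 : (0 : F) ∉ G)
    (hmul : ∀ x ∈ G, ∀ y ∈ G, x * y ∈ G) (hinv : ∀ x ∈ G, x⁻¹ ∈ G) (φ : ℕ → ℕ → M) :
    ∑ a, ∑ b, φ #(linePoints G a b) #(linePoints G a (lam * b))
      = ∑ s, ∑ c, φ #(linePoints G s c) #(linePoints G (lam * s) c) := by
  rw [sum_comm]
  refine sum_congr rfl fun s _ => sum_congr rfl fun c _ => ?_
  rw [card_linePoints_comm h0 hmul hinv c s, card_linePoints_comm h0 hmul hinv c (lam * s)]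

theorem abs_card_collinearSextuples_sub_le (h0 : (0 : F) ∉ G) (h1 : (1 : F) ∈ G)
    (hmul : ∀ x ∈ G, ∀ y ∈ G, x * y ∈ G) (hlam : lam ≠ 0) {Δ : ℝ} (hΔ : 1 ≤ Δ) :
    |(#(collinearSextuples G lam) : ℝ) - #G ^ 6 / Fintype.card F|
      ≤ 6 * (#G ^ 4 + Δ * #G ^ 2 * Fintype.card F
        + ∑ a, ∑ b, if Δ < (#(linePoints G a b) : ℝ) then
            (#(linePoints G a b) : ℝ) * (#(linePoints G a (lam * b)) - #G ^ 2 / Fintype.card F) ^ 2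
          else 0) := by
  have hW := sum_sum_comp_card_linePoints_swap G lam h0 hmul
    (fun x hx => inv_mem_of_mul_mem h0 h1 hmul hx) fun i j =>
      if Δ < (i : ℝ) then (i : ℝ) * ((j : ℝ) - #G ^ 2 / Fintype.card F) ^ 2 else 0
  have hW0 : 0 ≤ ∑ s, ∑ c, if Δ < (#(linePoints G s c) : ℝ) then
      (#(linePoints G s c) : ℝ) * (#(linePoints G (lam * s) c) - #G ^ 2 / Fintype.card F) ^ 2
        else 0 :=
    sum_nonneg fun s _ => sum_nonneg fun c _ => by positivity
  have hupper : (#(collinearSextuples G lam) : ℝ) + #G ^ 4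
      ≤ ∑ s, ∑ c, (#(linePoints G s c) : ℝ) * #(linePoints G (lam * s) c) ^ 2 := by
    exact_mod_cast card_collinearSextuples_add_le G lam
  have hlower : ∑ s, ∑ c, (#(linePoints G s c) : ℝ) * #(linePoints G (lam * s) c) ^ 2
      ≤ #(collinearSextuples G lam) + #G ^ 4
        + ∑ s, ∑ c, (#(linePoints G s c) : ℝ) * #(linePoints G (lam * s) c) := by
    exact_mod_cast le_card_collinearSextuples_add G lam hlam
  have hmain := abs_le.mp (abs_sum_card_linePoints_mul_sq_sub_le G lam hlam (by linarith : 0 ≤ Δ))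
  have hcross := sum_card_linePoints_mul_le G lam hlam
  have hqG : (0 : ℝ) ≤ Fintype.card F * #G ^ 2 := by positivity
  have hΔq : (Fintype.card F : ℝ) * #G ^ 2 ≤ Δ * #G ^ 2 * Fintype.card F := by nlinarith
  have hG : (0 : ℝ) ≤ #G ^ 4 := by positivity
  rw [hW, abs_le]
  constructor <;> linarith

end LinePoints

/-- For a multiplicative subgroup `G ≤ F_p^*`, `λ ∈ F_p^*` and a parameter `Δ ≥ 3`,
`|T_λ(G) − |G|⁶/p| ≪ |G|⁴ + Δ|G|²p + W`, where `W` is the contribution of lines with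
`ι_G(ℓ_{a,b}) > Δ` to `Σ ι_G(ℓ_{a,b})(ι_G(ℓ_{a,λb}) − |G|²/p)²`. -/
theorem collinear_triples_splitting :
    ∃ C : ℝ, 0 < C ∧ ∀ (p : ℕ) [Fact p.Prime] (G : Finset (ZMod p)),
      (0 : ZMod p) ∉ G → (1 : ZMod p) ∈ G → (∀ x ∈ G, ∀ y ∈ G, x * y ∈ G) →
      ∀ lam : ZMod p, lam ≠ 0 → ∀ Δ : ℝ, 3 ≤ Δ →
      |((((G ×ˢ G ×ˢ G) ×ˢ (G ×ˢ G ×ˢ G)).filter (fun t =>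
            t.1.1 - t.1.2.2 ≠ 0 ∧ t.2.1 - lam * t.2.2.2 ≠ 0 ∧
            (t.1.1 - t.1.2.1) / (t.1.1 - t.1.2.2)
              = (t.2.1 - lam * t.2.2.1) / (t.2.1 - lam * t.2.2.2))).card : ℝ)
          - (G.card : ℝ)^6 / (p : ℝ)|
        ≤ C * ((G.card : ℝ)^4 + Δ * (G.card : ℝ)^2 * (p : ℝ)
            + ∑ a : ZMod p, ∑ b : ZMod p,
              (if Δ < (((G ×ˢ G).filter (fun xy => xy.2 = a * xy.1 + b)).card : ℝ) then
                ((((G ×ˢ G).filter (fun xy => xy.2 = a * xy.1 + b)).card : ℝ) *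
                  ((((G ×ˢ G).filter (fun xy =>
                      xy.2 = a * xy.1 + lam * b)).card : ℝ)
                    - (G.card : ℝ)^2 / (p : ℝ))^2)
              else 0)) := by
  refine ⟨6, by norm_num, fun p _ G h0 h1 hmul lam hlam Δ hΔ => ?_⟩
  have h := abs_card_collinearSextuples_sub_le G lam h0 h1 hmul hlam (by linarith : (1 : ℝ) ≤ Δ)
  rwa [ZMod.card] at h
end

section
/- For any finite set U ⊆ F_p^* with |U| = U, D_×(U) ≪ U^2·T(U) + U^6, where D_×(U) is the number of solutions to (u1−v1)(u2−v2) = (u3−v3)(u4−v4) with all u_i, v_i ∈ U, and T(U) is the number of solutions to (u1−v1)/(u1−w1) = (u2−v2)/(u2−w2) with u_i, v_i, w_i ∈ U and u_i ≠ w_i. -/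
/-!
Split the quadruples `(a, b, c, d) ∈ (U × U)⁴` according to whether `(c₁ - c₂)(d₁ - d₂)`
vanishes; there are at most `(2|U|³)²` degenerate ones. A nondegenerate quadruple has a nonzero
slope `l = (a₁ - a₂)/(c₁ - c₂)`, and then `(c₁, a₁), (c₂, a₂)` and `(b₁, d₁), (b₂, d₂)` are two
pairs of distinct points of `U × U`, each on a line of slope `l`. If `q_s` points of `U × U` lie
on the line `y = l x + s`, there are `∑ q_s (q_s - 1)` such pairs, and by Cauchy–Schwarz
`(∑ q_s (q_s - 1))² ≤ ∑ q_s · ∑ q_s² (q_s - 1) = |U|² · #{(Q, P, R) collinear of slope l, P ≠ R}`.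
Reading such a triple coordinatewise gives an element of `T(U)` whose ratio
`(u₂ - w₂)/(u₁ - w₁)` is `l`, so summing over `l` yields `D_×(U) ≤ |U|² T(U) + 4 |U|⁶`.
-/

open Finset

section FiberCounting

variable {α β : Type*} [DecidableEq β]

def fiberPairs (S : Finset α) (f : α → β) : Finset (α × α) :=
  S.offDiag.filter fun x => f x.1 = f x.2

def fiberTriples (S : Finset α) (f : α → β) : Finset (α × α × α) :=
  (S ×ˢ S.offDiag).filter fun x => f x.2.1 = f x.1 ∧ f x.2.2 = f x.1

@[simp]
lemma mem_fiberPairs {S : Finset α} {f : α → β} {x : α × α} :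
    x ∈ fiberPairs S f ↔ x.1 ∈ S ∧ x.2 ∈ S ∧ x.1 ≠ x.2 ∧ f x.1 = f x.2 := by
  simp only [fiberPairs, mem_filter, mem_offDiag, and_assoc]

@[simp]
lemma mem_fiberTriples {S : Finset α} {f : α → β} {x : α × α × α} :
    x ∈ fiberTriples S f ↔
      x.1 ∈ S ∧ x.2.1 ∈ S ∧ x.2.2 ∈ S ∧ x.2.1 ≠ x.2.2 ∧ f x.2.1 = f x.1 ∧ f x.2.2 = f x.1 := by
  simp only [fiberTriples, mem_filter, mem_product, mem_offDiag, and_assoc]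

lemma card_fiberPairs (S : Finset α) (f : α → β) :
    #(fiberPairs S f) = ∑ b ∈ S.image f, #(S.filter (f · = b)).offDiag := by
  rw [card_eq_sum_card_fiberwise (f := fun x => f x.1) (t := S.image f)]
  · refine sum_congr rfl fun b _ => congrArg card ?_
    ext ⟨x, y⟩
    simp only [mem_filter, mem_fiberPairs, mem_offDiag]
    grind
  · intro x hx
    exact mem_image_of_mem f (mem_fiberPairs.mp hx).1

lemma card_fiberTriples (S : Finset α) (f : α → β) :
    #(fiberTriples S f) =
      ∑ b ∈ S.image f, #(S.filter (f · = b)) * #(S.filter (f · = b)).offDiag := by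
  rw [card_eq_sum_card_fiberwise (f := fun x => f x.1) (t := S.image f)]
  · refine sum_congr rfl fun b _ => ?_
    rw [← card_product]
    congr 1
    ext ⟨x, y, z⟩
    simp only [mem_filter, mem_fiberTriples, mem_product, mem_offDiag]
    grind
  · intro x hx
    exact mem_image_of_mem f (mem_fiberTriples.mp hx).1

lemma sq_sum_card_offDiag_le {ι : Type*} (s : Finset ι) (t : ι → Finset α) :
    (∑ i ∈ s, #(t i).offDiag) ^ 2 ≤
      (∑ i ∈ s, #(t i)) * ∑ i ∈ s, #(t i) * #(t i).offDiag := by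
  refine sum_sq_le_sum_mul_sum_of_sq_le_mul s (fun _ _ => Nat.zero_le _)
    (fun _ _ => Nat.zero_le _) fun i _ => ?_
  calc #(t i).offDiag ^ 2 = #(t i) * ((#(t i) - 1) * #(t i).offDiag) := by
        rw [offDiag_card, ← mul_assoc, ← Nat.mul_sub_one, sq]
    _ ≤ #(t i) * (#(t i) * #(t i).offDiag) := by gcongr; exact Nat.sub_le _ _

lemma card_fiberPairs_sq_le (S : Finset α) (f : α → β) :
    #(fiberPairs S f) ^ 2 ≤ #S * #(fiberTriples S f) := by
  rw [card_fiberPairs, card_fiberTriples, card_eq_sum_card_image f S]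
  exact sq_sum_card_offDiag_le _ _

end FiberCounting

section Field

variable {K : Type*} [Field K] [DecidableEq K]

def intercept (l : K) (P : K × K) : K := P.2 - l * P.1

def diffMulQuadruples (U : Finset K) :
    Finset (((K × K) × (K × K)) × ((K × K) × (K × K))) :=
  (((U ×ˢ U) ×ˢ (U ×ˢ U)) ×ˢ ((U ×ˢ U) ×ˢ (U ×ˢ U))).filter fun t =>
    (t.1.1.1 - t.1.1.2) * (t.1.2.1 - t.1.2.2) = (t.2.1.1 - t.2.1.2) * (t.2.2.1 - t.2.2.2)

def collinearTriples (U : Finset K) : Finset ((K × K × K) × (K × K × K)) :=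
  ((U ×ˢ U ×ˢ U) ×ˢ (U ×ˢ U ×ˢ U)).filter fun t =>
    t.1.1 - t.1.2.2 ≠ 0 ∧ t.2.1 - t.2.2.2 ≠ 0 ∧
      (t.1.1 - t.1.2.1) / (t.1.1 - t.1.2.2) = (t.2.1 - t.2.2.1) / (t.2.1 - t.2.2.2)

lemma card_filter_diff_mul_diff_eq_zero_le (U : Finset K) :
    #(((U ×ˢ U) ×ˢ (U ×ˢ U)).filter fun x => (x.1.1 - x.1.2) * (x.2.1 - x.2.2) = 0)
      ≤ 2 * #U ^ 3 := by
  calc _ ≤ #(U.diag ×ˢ (U ×ˢ U) ∪ (U ×ˢ U) ×ˢ U.diag) := by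
        refine card_le_card fun x hx => ?_
        simp only [mem_filter, mem_product, mul_eq_zero, sub_eq_zero] at hx
        simp only [mem_union, mem_product, mem_diag]
        tauto
    _ ≤ #(U.diag ×ˢ (U ×ˢ U)) + #((U ×ˢ U) ×ˢ U.diag) := card_union_le _ _
    _ = 2 * #U ^ 3 := by simp only [card_product, diag_card]; ring

lemma card_diffMulQuadruples_filter_degenerate_le (U : Finset K) :
    #((diffMulQuadruples U).filter fun t => (t.2.1.1 - t.2.1.2) * (t.2.2.1 - t.2.2.2) = 0)
      ≤ 4 * #U ^ 6 := by
  set Z := ((U ×ˢ U) ×ˢ (U ×ˢ U)).filter fun x => (x.1.1 - x.1.2) * (x.2.1 - x.2.2) = 0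
  calc _ ≤ #(Z ×ˢ Z) := by
        refine card_le_card fun t ht => ?_
        simp only [diffMulQuadruples, mem_filter, mem_product] at ht
        simp only [Z, mem_product, mem_filter]
        grind
    _ ≤ (2 * #U ^ 3) * (2 * #U ^ 3) := by
        rw [card_product]
        exact Nat.mul_le_mul (card_filter_diff_mul_diff_eq_zero_le U)
          (card_filter_diff_mul_diff_eq_zero_le U)
    _ = 4 * #U ^ 6 := by ring

lemma card_diffMulQuadruples_filter_slope_le (U : Finset K) (l : K) :
    #(((diffMulQuadruples U).filter fun t => (t.2.1.1 - t.2.1.2) * (t.2.2.1 - t.2.2.2) ≠ 0)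
        |>.filter fun t => (t.1.1.1 - t.1.1.2) / (t.2.1.1 - t.2.1.2) = l)
      ≤ #(fiberPairs (U ×ˢ U) (intercept l)) ^ 2 := by
  rw [sq, ← card_product]
  refine card_le_card_of_injOn
    (fun t => (((t.2.1.1, t.1.1.1), (t.2.1.2, t.1.1.2)), ((t.1.2.1, t.2.2.1), (t.1.2.2, t.2.2.2))))
    (fun t ht => ?_) (fun t _ t' _ h => ?_)
  · obtain ⟨⟨⟨hU, hprod⟩, hcd⟩, hslope⟩ := by
      simpa only [diffMulQuadruples, mem_coe, mem_filter] using ht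
    have hc : t.2.1.1 - t.2.1.2 ≠ 0 := left_ne_zero_of_mul hcd
    have hb : t.1.2.1 - t.1.2.2 ≠ 0 := right_ne_zero_of_mul (hprod ▸ hcd)
    have ha : t.1.1.1 - t.1.1.2 = l * (t.2.1.1 - t.2.1.2) := by
      rw [← hslope, div_mul_cancel₀ _ hc]
    have hd' : t.2.2.1 - t.2.2.2 = l * (t.1.2.1 - t.1.2.2) := by
      refine mul_left_cancel₀ hc ?_
      linear_combination -hprod + (t.1.2.1 - t.1.2.2) * ha
    simp only [mem_product] at hU
    simp only [mem_coe, mem_product, mem_fiberPairs, intercept, ne_eq, Prod.mk.injEq]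
    refine ⟨⟨?_, ?_, fun h => hc (sub_eq_zero.mpr h.1), by linear_combination ha⟩,
      ?_, ?_, fun h => hb (sub_eq_zero.mpr h.1), by linear_combination hd'⟩ <;> tauto
  · simp only [Prod.mk.injEq] at h
    ext <;> tauto

lemma card_fiberTriples_intercept_le (U : Finset K) {l : K} (hl : l ≠ 0) :
    #(fiberTriples (U ×ˢ U) (intercept l))
      ≤ #((collinearTriples U).filter fun t => (t.2.1 - t.2.2.2) / (t.1.1 - t.1.2.2) = l) := by
  refine card_le_card_of_injOn
    (fun x => ((x.2.1.1, x.1.1, x.2.2.1), (x.2.1.2, x.1.2, x.2.2.2)))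
    (fun x hx => ?_) (fun x _ x' _ h => ?_)
  · obtain ⟨hQ, hP, hR, hPR, hPQ, hRQ⟩ := by
      simpa only [mem_coe, mem_fiberTriples] using hx
    simp only [intercept] at hPQ hRQ
    simp only [mem_product] at hP hQ hR
    have hPR₁ : x.2.1.1 - x.2.2.1 ≠ 0 := fun h =>
      hPR (Prod.ext (sub_eq_zero.mp h) (by linear_combination hPQ - hRQ + l * h))
    have hPR₂ : x.2.1.2 - x.2.2.2 = l * (x.2.1.1 - x.2.2.1) := by linear_combination hPQ - hRQ
    have hPQ₂ : x.2.1.2 - x.1.2 = l * (x.2.1.1 - x.1.1) := by linear_combination hPQ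
    simp only [mem_coe, collinearTriples, mem_filter, mem_product]
    refine ⟨⟨⟨⟨hP.1, hQ.1, hR.1⟩, hP.2, hQ.2, hR.2⟩, hPR₁, ?_, ?_⟩, ?_⟩
    · rw [hPR₂]; exact mul_ne_zero hl hPR₁
    · rw [hPR₂, hPQ₂, mul_div_mul_left _ _ hl]
    · rw [hPR₂, mul_div_cancel_right₀ _ hPR₁]
  · simp only [Prod.mk.injEq] at h
    ext <;> tauto

theorem card_diffMulQuadruples_le (U : Finset K) :
    #(diffMulQuadruples U) ≤ #U ^ 2 * #(collinearTriples U) + 4 * #U ^ 6 := by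
  set D₁ := (diffMulQuadruples U).filter
    fun t => (t.2.1.1 - t.2.1.2) * (t.2.2.1 - t.2.2.2) ≠ 0
  set slope := fun t : ((K × K) × (K × K)) × ((K × K) × (K × K)) =>
    (t.1.1.1 - t.1.1.2) / (t.2.1.1 - t.2.1.2)
  set ratio := fun t : (K × K × K) × (K × K × K) => (t.2.1 - t.2.2.2) / (t.1.1 - t.1.2.2)
  have slope_ne_zero : ∀ l ∈ D₁.image slope, l ≠ 0 := by
    simp only [D₁, diffMulQuadruples, mem_image, mem_filter, slope]
    rintro _ ⟨t, ⟨⟨_, hprod⟩, hcd⟩, rfl⟩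
    exact div_ne_zero (left_ne_zero_of_mul (hprod ▸ hcd)) (left_ne_zero_of_mul hcd)
  have hD₁ : #D₁ ≤ #U ^ 2 * #(collinearTriples U) := calc
    #D₁ = ∑ l ∈ D₁.image slope, #(D₁.filter (slope · = l)) := card_eq_sum_card_image _ _
    _ ≤ ∑ l ∈ D₁.image slope, #U ^ 2 * #((collinearTriples U).filter (ratio · = l)) := by
        refine sum_le_sum fun l hl => ?_
        calc _ ≤ #(fiberPairs (U ×ˢ U) (intercept l)) ^ 2 :=
              card_diffMulQuadruples_filter_slope_le U l
          _ ≤ #(U ×ˢ U) * #(fiberTriples (U ×ˢ U) (intercept l)) := card_fiberPairs_sq_le _ _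
          _ ≤ _ := by
              rw [card_product, ← sq]
              exact Nat.mul_le_mul_left _ (card_fiberTriples_intercept_le U (slope_ne_zero l hl))
    _ = #U ^ 2 * #((collinearTriples U).filter (ratio · ∈ D₁.image slope)) := by
        rw [← mul_sum, sum_card_fiberwise_eq_card_filter]
    _ ≤ #U ^ 2 * #(collinearTriples U) := Nat.mul_le_mul_left _ (card_filter_le _ _)
  have hsplit : #((diffMulQuadruples U).filter
      fun t => (t.2.1.1 - t.2.1.2) * (t.2.2.1 - t.2.2.2) = 0) + #D₁ = #(diffMulQuadruples U) :=
    card_filter_add_card_filter_not _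
  have hdeg := card_diffMulQuadruples_filter_degenerate_le U
  omega

end Field

/-- For any finite `U ⊆ F_p^*`, `D_×(U) ≪ |U|²·T(U) + |U|⁶` with an absolute
implied constant, where `D_×(U)` counts solutions of
`(u₁−v₁)(u₂−v₂) = (u₃−v₃)(u₄−v₄)` and `T(U)` counts collinear triples. -/
theorem Dtimes_bound_by_T :
    ∃ C : ℝ, 0 < C ∧ ∀ (p : ℕ) [Fact p.Prime] (U : Finset (ZMod p)),
      (0 : ZMod p) ∉ U →
      (((((U ×ˢ U) ×ˢ (U ×ˢ U)) ×ˢ ((U ×ˢ U) ×ˢ (U ×ˢ U))).filter (fun t =>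
          (t.1.1.1 - t.1.1.2) * (t.1.2.1 - t.1.2.2)
            = (t.2.1.1 - t.2.1.2) * (t.2.2.1 - t.2.2.2))).card : ℝ)
      ≤ C * ((U.card : ℝ)^2 *
          ((((U ×ˢ U ×ˢ U) ×ˢ (U ×ˢ U ×ˢ U)).filter (fun t =>
              t.1.1 - t.1.2.2 ≠ 0 ∧ t.2.1 - t.2.2.2 ≠ 0 ∧
              (t.1.1 - t.1.2.1) / (t.1.1 - t.1.2.2)
                = (t.2.1 - t.2.2.1) / (t.2.1 - t.2.2.2))).card : ℝ)
        + (U.card : ℝ)^6) := by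
  refine ⟨4, by norm_num, fun p _ U _ => ?_⟩
  have h : (#(diffMulQuadruples U) : ℝ) ≤ #U ^ 2 * #(collinearTriples U) + 4 * #U ^ 6 := by
    exact_mod_cast card_diffMulQuadruples_le U
  have hT : (0 : ℝ) ≤ #U ^ 2 * #(collinearTriples U) := by positivity
  unfold diffMulQuadruples collinearTriples at h hT
  linarith
end
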